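/- arXiv:1808.09387 — 10 statements merged into one kernel-verified Lean document; each statement's English description precedes it below -/
import Mathlib

section
/- Let G be a simple graph with distinct vertices a and b, and let H be the shortest path graph S(G,a,b). If (U₀,U₁,U₂) is a triangle in H and U is a vertex of H distinct from U₀,U₁,U₂ with U adjacent to U₀, then U is adjacent to both U₁ and U₂, or U is adjacent to neither U₁ nor U₂. -/
open SimpleGraph

variable {V : Type*}

/-- An `(a,b)`-geodesic in `G`: a shortest path from `a` to `b`. -/
def Geodesic (G : SimpleGraph V) (a b : V) : Type _ :=
  {p : G.Walk a b // p.IsPath ∧ p.length = G.dist a b}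

/-- The set of index levels at which two geodesics differ
(position `i` in the support list is index level `i`; position `0` is `a`). -/
def diffIndices (G : SimpleGraph V) (a b : V) (U W : Geodesic G a b) : Set ℕ :=
  {i | U.1.support[i]? ≠ W.1.support[i]?}

/-- The shortest path graph `S(G,a,b)`: vertices are the `(a,b)`-geodesics,
two geodesics being adjacent iff they differ at exactly one index level. -/
def SPG (G : SimpleGraph V) (a b : V) : SimpleGraph (Geodesic G a b) where
  Adj U W := ∃! i, i ∈ diffIndices G a b U W
  symm := by
    constructor
    rintro U W ⟨i, hi, hu⟩
    exact ⟨i, Ne.symm hi, fun j hj => hu j (Ne.symm hj)⟩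
  loopless := by
    constructor
    rintro U ⟨i, hi, -⟩
    exact hi rfl


/-! The vertex sequences of geodesics embed `SPG G a b` as an induced subgraph of the Hamming graph
on `ℕ → Option V`. In a Hamming graph the three vertices of a triangle agree off a single
coordinate `i`. A neighbour `y` of `x₀` differs from it at one coordinate `m`: if `m = i`, then `y`
differs from `x₁` and from `x₂` at `i` only; otherwise it differs from each of them at both `i`
and `m`. -/

/-- For finite `ι`, adjacency is `hammingDist x y = 1`. -/
def hammingGraph (ι β : Type*) : SimpleGraph (ι → β) where
  Adj x y := ∃! i, x i ≠ y i
  symm := ⟨fun _ _ ⟨i, hi, h⟩ => ⟨i, Ne.symm hi, fun j hj => h j (Ne.symm hj)⟩⟩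
  loopless := ⟨fun _ ⟨_, hi, _⟩ => hi rfl⟩

namespace hammingGraph

variable {ι β : Type*} {x y : ι → β} {i j : ι}

lemma adj_iff : (hammingGraph ι β).Adj x y ↔ ∃! i, x i ≠ y i := Iff.rfl

lemma eqOn_compl_of_adj (h : (hammingGraph ι β).Adj x y) (hi : x i ≠ y i) :
    Set.EqOn x y {i}ᶜ :=
  fun _ hj => by_contra fun hxy => hj ((adj_iff.1 h).unique hxy hi)

lemma not_adj_of_ne_of_ne (hij : i ≠ j) (hi : x i ≠ y i) (hj : x j ≠ y j) :
    ¬ (hammingGraph ι β).Adj x y :=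
  fun h => hij ((adj_iff.1 h).unique hi hj)

lemma adj_iff_ne_of_eqOn (h : Set.EqOn x y {i}ᶜ) : (hammingGraph ι β).Adj x y ↔ x ≠ y := by
  refine ⟨(hammingGraph ι β).ne_of_adj, fun hxy => ?_⟩
  have hi : x i ≠ y i := fun hi => hxy (funext fun j => by
    by_cases hj : j = i
    · exact hj ▸ hi
    · exact h hj)
  exact adj_iff.2 ⟨i, hi, fun j hj => by_contra fun hji => hj (h hji)⟩

lemma ne_of_adj_of_eqOn (hxy : (hammingGraph ι β).Adj x y) (h : Set.EqOn x y {i}ᶜ) :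
    x i ≠ y i := by
  obtain ⟨k, hk, -⟩ := adj_iff.1 hxy
  by_cases hki : k = i
  · exact hki ▸ hk
  · exact absurd (h hki) hk

lemma eqOn_compl_of_triangle {x₀ x₁ x₂ : ι → β} (h01 : (hammingGraph ι β).Adj x₀ x₁)
    (h12 : (hammingGraph ι β).Adj x₁ x₂) (h02 : (hammingGraph ι β).Adj x₀ x₂)
    (hi : x₀ i ≠ x₁ i) : Set.EqOn x₀ x₂ {i}ᶜ := by
  intro j hji
  by_contra hj
  have h01j : x₀ j = x₁ j := eqOn_compl_of_adj h01 hi hji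
  have h12i : x₁ i = x₂ i := eqOn_compl_of_adj h12 (h01j ▸ hj) (Ne.symm hji)
  exact not_adj_of_ne_of_ne (Ne.symm hji) (h12i ▸ hi) hj h02

lemma adj_iff_adj_of_triangle {x₀ x₁ x₂ y : ι → β} (h01 : (hammingGraph ι β).Adj x₀ x₁)
    (h12 : (hammingGraph ι β).Adj x₁ x₂) (h02 : (hammingGraph ι β).Adj x₀ x₂)
    (hy1 : y ≠ x₁) (hy2 : y ≠ x₂) (hy0 : (hammingGraph ι β).Adj y x₀) :
    (hammingGraph ι β).Adj y x₁ ↔ (hammingGraph ι β).Adj y x₂ := by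
  obtain ⟨i, hi, -⟩ := adj_iff.1 h01
  have h01' : Set.EqOn x₀ x₁ {i}ᶜ := eqOn_compl_of_adj h01 hi
  have h02' : Set.EqOn x₀ x₂ {i}ᶜ := eqOn_compl_of_triangle h01 h12 h02 hi
  obtain ⟨m, hm, -⟩ := adj_iff.1 hy0
  have hy0' : Set.EqOn y x₀ {m}ᶜ := eqOn_compl_of_adj hy0 hm
  by_cases hmi : m = i
  · subst hmi
    exact iff_of_true ((adj_iff_ne_of_eqOn (hy0'.trans h01')).2 hy1)
      ((adj_iff_ne_of_eqOn (hy0'.trans h02')).2 hy2)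
  · have hyi : y i = x₀ i := hy0' (Ne.symm hmi)
    exact iff_of_false (not_adj_of_ne_of_ne hmi (h01' hmi ▸ hm) (hyi ▸ hi))
      (not_adj_of_ne_of_ne hmi (h02' hmi ▸ hm) (hyi ▸ ne_of_adj_of_eqOn h02 h02'))

end hammingGraph

def Geodesic.vertexSeq {G : SimpleGraph V} {a b : V} (U : Geodesic G a b) : ℕ → Option V :=
  fun i => U.1.support[i]?

lemma Geodesic.vertexSeq_injective {G : SimpleGraph V} {a b : V} :
    Function.Injective (Geodesic.vertexSeq (G := G) (a := a) (b := b)) :=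
  fun _ _ h => Subtype.ext (Walk.support_injective (List.ext_getElem? (congrFun h)))

lemma SPG_adj_iff {G : SimpleGraph V} {a b : V} {U W : Geodesic G a b} :
    (SPG G a b).Adj U W ↔ (hammingGraph ℕ (Option V)).Adj U.vertexSeq W.vertexSeq :=
  hammingGraph.adj_iff.symm

theorem stmt_0_general {V : Type*} (G : SimpleGraph V) (a b : V)
    (U₀ U₁ U₂ U : Geodesic G a b)
    (h01 : (SPG G a b).Adj U₀ U₁) (h12 : (SPG G a b).Adj U₁ U₂)
    (h02 : (SPG G a b).Adj U₀ U₂)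
    (hU1 : U ≠ U₁) (hU2 : U ≠ U₂)
    (hadj : (SPG G a b).Adj U U₀) :
    ((SPG G a b).Adj U U₁ ∧ (SPG G a b).Adj U U₂) ∨
      (¬ (SPG G a b).Adj U U₁ ∧ ¬ (SPG G a b).Adj U U₂) := by
  rw [SPG_adj_iff] at h01 h12 h02 hadj
  rw [← iff_iff_and_or_not_and_not, SPG_adj_iff, SPG_adj_iff]
  exact hammingGraph.adj_iff_adj_of_triangle h01 h12 h02
    (Geodesic.vertexSeq_injective.ne hU1) (Geodesic.vertexSeq_injective.ne hU2) hadj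

/-- triangle neighbor dichotomy. -/
theorem stmt_0 {V : Type*} (G : SimpleGraph V) (a b : V) (hab : a ≠ b)
    (U₀ U₁ U₂ U : Geodesic G a b)
    (h01 : (SPG G a b).Adj U₀ U₁) (h12 : (SPG G a b).Adj U₁ U₂)
    (h02 : (SPG G a b).Adj U₀ U₂)
    (hU0 : U ≠ U₀) (hU1 : U ≠ U₁) (hU2 : U ≠ U₂)
    (hadj : (SPG G a b).Adj U U₀) :
    ((SPG G a b).Adj U U₁ ∧ (SPG G a b).Adj U U₂) ∨
      (¬ (SPG G a b).Adj U U₁ ∧ ¬ (SPG G a b).Adj U U₂) :=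
  stmt_0_general G a b U₀ U₁ U₂ U h01 h12 h02 hU1 hU2 hadj
end

section
/- Let H be a shortest path graph and let K₁ and K₂ be two distinct maximal cliques in H. Then exactly one of the following holds: (i) there is no edge between a vertex of K₁ and a vertex of K₂ and K₁, K₂ are vertex-disjoint; (ii) K₁ and K₂ are vertex-disjoint and the set of edges joining vertices of K₁ to vertices of K₂ forms a nonempty matching (no two such edges share an endpoint); or (iii) K₁ and K₂ share exactly one vertex. -/
open SimpleGraph

variable {V : Type*}

/-!
Two adjacent geodesics differ at exactly one level `i`. Comparing the sets of levels at which
three geodesics pairwise differ (each is covered by the union of the other two) shows that a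
common neighbour of them differs from both only at level `i`; hence so does every member of a
clique containing them. Conversely, geodesics that differ from a fixed one only at level `i`
form a clique. So the union of two maximal cliques sharing two vertices is again a clique, and a
vertex outside a maximal clique with two neighbours in it could be added to it: two maximal
cliques meet in at most one vertex, and disjoint ones are joined by a matching.
-/

namespace SPG

variable {G : SimpleGraph V} {a b : V}

theorem diffIndices_comm (U W : Geodesic G a b) :
    diffIndices G a b U W = diffIndices G a b W U :=
  Set.ext fun _ => ne_comm

theorem diffIndices_subset_union (U X W : Geodesic G a b) :
    diffIndices G a b U W ⊆ diffIndices G a b U X ∪ diffIndices G a b X W := by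
  intro k hk
  by_contra h
  rw [Set.mem_union, not_or] at h
  exact hk ((of_not_not h.1).trans (of_not_not h.2))

theorem diffIndices_eq_empty_iff {U W : Geodesic G a b} :
    diffIndices G a b U W = ∅ ↔ U = W := by
  refine ⟨fun h => Subtype.ext (Walk.ext_support (List.ext_getElem? fun k => ?_)), ?_⟩
  · by_contra hk
    exact Set.eq_empty_iff_forall_notMem.1 h k hk
  · rintro rfl
    exact Set.eq_empty_of_forall_notMem fun _ h => h rfl

theorem adj_iff {U W : Geodesic G a b} :
    (SPG G a b).Adj U W ↔ ∃ i, diffIndices G a b U W = {i} := by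
  constructor
  · rintro ⟨i, hi, huniq⟩
    exact ⟨i, Set.eq_singleton_iff_unique_mem.2 ⟨hi, huniq⟩⟩
  rintro ⟨i, hi⟩
  exact ⟨i, hi ▸ Set.mem_singleton i, fun j hj => Set.mem_singleton_iff.1 (hi ▸ hj)⟩

theorem adj_of_diffIndices_subset {U W : Geodesic G a b} {i : ℕ} (hne : U ≠ W)
    (hsub : diffIndices G a b U W ⊆ {i}) : (SPG G a b).Adj U W := by
  refine adj_iff.2 ⟨i, (Set.subset_singleton_iff_eq.1 hsub).resolve_left ?_⟩
  exact fun h => hne (diffIndices_eq_empty_iff.1 h)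

theorem diffIndices_subset_of_adj_of_adj {u x y : Geodesic G a b} {i : ℕ}
    (hxy : diffIndices G a b x y = {i}) (hux : (SPG G a b).Adj u x)
    (huy : (SPG G a b).Adj u y) : diffIndices G a b u x ⊆ {i} := by
  obtain ⟨p, hp⟩ := adj_iff.1 hux
  obtain ⟨q, hq⟩ := adj_iff.1 huy
  have hi : i = q ∨ i = p := by
    simpa [hxy, diffIndices_comm x u, hp, hq] using diffIndices_subset_union x u y
  have hp' : p = i ∨ p = q := by
    simpa [hp, hq, diffIndices_comm y x, hxy] using diffIndices_subset_union u y x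
  rw [hp, Set.singleton_subset_singleton]
  rcases hp' with rfl | rfl
  · rfl
  · exact (hi.elim id id).symm

theorem _root_.SimpleGraph.IsClique.diffIndices_subset {K : Set (Geodesic G a b)}
    (hK : (SPG G a b).IsClique K) {x y u : Geodesic G a b} {i : ℕ} (hy : y ∈ K) (hx : x ∈ K)
    (hxy : diffIndices G a b x y = {i}) (hu : u ∈ K) : diffIndices G a b u x ⊆ {i} := by
  rcases eq_or_ne u x with rfl | hux
  · simp [diffIndices_eq_empty_iff.2 rfl]
  rcases eq_or_ne u y with rfl | huy
  · rw [diffIndices_comm, hxy]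
  exact diffIndices_subset_of_adj_of_adj hxy (hK hu hx hux) (hK hu hy huy)

theorem isClique_of_diffIndices_subset {S : Set (Geodesic G a b)} {x : Geodesic G a b} {i : ℕ}
    (hS : ∀ u ∈ S, diffIndices G a b u x ⊆ {i}) : (SPG G a b).IsClique S := by
  intro u hu w hw huw
  refine adj_of_diffIndices_subset (i := i) huw fun k hk => ?_
  rcases diffIndices_subset_union u x w hk with hk | hk
  · exact hS u hu hk
  · exact hS w hw (diffIndices_comm x w ▸ hk)

theorem inter_subsingleton_of_maximal {K₁ K₂ : Set (Geodesic G a b)}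
    (hK₁ : Maximal (SPG G a b).IsClique K₁) (hK₂ : Maximal (SPG G a b).IsClique K₂)
    (hne : K₁ ≠ K₂) : (K₁ ∩ K₂).Subsingleton := by
  rintro x ⟨hx₁, hx₂⟩ y ⟨hy₁, hy₂⟩
  by_contra hxy
  obtain ⟨i, hi⟩ := adj_iff.1 (hK₁.prop hx₁ hy₁ hxy)
  have hunion : (SPG G a b).IsClique (K₁ ∪ K₂) := by
    refine isClique_of_diffIndices_subset (x := x) (i := i) fun u hu => ?_
    rcases hu with hu | hu
    · exact hK₁.prop.diffIndices_subset hy₁ hx₁ hi hu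
    · exact hK₂.prop.diffIndices_subset hy₂ hx₂ hi hu
  exact hne ((hK₁.eq_of_subset hunion Set.subset_union_left).trans
    (hK₂.eq_of_subset hunion Set.subset_union_right).symm)

theorem inter_neighborSet_subsingleton_of_maximal {K : Set (Geodesic G a b)}
    (hK : Maximal (SPG G a b).IsClique K) {u : Geodesic G a b} (hu : u ∉ K) :
    (K ∩ (SPG G a b).neighborSet u).Subsingleton := by
  rintro w ⟨hw, huw⟩ w' ⟨hw', huw'⟩
  by_contra hne
  obtain ⟨i, hi⟩ := adj_iff.1 (hK.prop hw hw' hne)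
  have hins : (SPG G a b).IsClique (insert u K) := by
    refine isClique_of_diffIndices_subset (x := w) (i := i) fun v hv => ?_
    rcases hv with rfl | hv
    · exact diffIndices_subset_of_adj_of_adj hi huw huw'
    · exact hK.prop.diffIndices_subset hw' hw hi hv
  exact hu (hK.eq_of_subset hins (Set.subset_insert u K) ▸ Set.mem_insert u K)

end SPG

theorem stmt_3_general {V : Type*} (G : SimpleGraph V) (a b : V)
    (K₁ K₂ : Set (Geodesic G a b))
    (hK₁ : (SPG G a b).IsClique K₁)
    (hmax₁ : ∀ K', (SPG G a b).IsClique K' → K₁ ⊆ K' → K' = K₁)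
    (hK₂ : (SPG G a b).IsClique K₂)
    (hmax₂ : ∀ K', (SPG G a b).IsClique K' → K₂ ⊆ K' → K' = K₂)
    (hne : K₁ ≠ K₂) :
    let P₁ : Prop := Disjoint K₁ K₂ ∧ ∀ u ∈ K₁, ∀ w ∈ K₂, ¬ (SPG G a b).Adj u w
    let P₂ : Prop := Disjoint K₁ K₂ ∧ (∃ u ∈ K₁, ∃ w ∈ K₂, (SPG G a b).Adj u w) ∧
      (∀ u ∈ K₁, ∀ w ∈ K₂, ∀ w' ∈ K₂, (SPG G a b).Adj u w → (SPG G a b).Adj u w' → w = w') ∧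
      (∀ w ∈ K₂, ∀ u ∈ K₁, ∀ u' ∈ K₁, (SPG G a b).Adj w u → (SPG G a b).Adj w u' → u = u')
    let P₃ : Prop := ∃ x, K₁ ∩ K₂ = {x}
    (P₁ ∧ ¬P₂ ∧ ¬P₃) ∨ (¬P₁ ∧ P₂ ∧ ¬P₃) ∨ (¬P₁ ∧ ¬P₂ ∧ P₃) := by
  intro P₁ P₂ P₃
  have hM₁ : Maximal (SPG G a b).IsClique K₁ := ⟨hK₁, fun K' hK' h => (hmax₁ K' hK' h).le⟩
  have hM₂ : Maximal (SPG G a b).IsClique K₂ := ⟨hK₂, fun K' hK' h => (hmax₂ K' hK' h).le⟩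
  by_cases hdisj : Disjoint K₁ K₂
  · have hnP₃ : ¬P₃ := fun ⟨x, hx⟩ =>
      Set.singleton_nonempty x |>.ne_empty (hx ▸ Set.disjoint_iff_inter_eq_empty.1 hdisj)
    by_cases hedge : ∃ u ∈ K₁, ∃ w ∈ K₂, (SPG G a b).Adj u w
    · refine Or.inr (Or.inl ⟨fun hP₁ => ?_, ⟨hdisj, hedge, ?_, ?_⟩, hnP₃⟩)
      · obtain ⟨u, hu, w, hw, huw⟩ := hedge
        exact hP₁.2 u hu w hw huw
      · exact fun u hu w hw w' hw' huw huw' =>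
          SPG.inter_neighborSet_subsingleton_of_maximal hM₂ (Set.disjoint_left.1 hdisj hu)
            ⟨hw, huw⟩ ⟨hw', huw'⟩
      · exact fun w hw u hu u' hu' hwu hwu' =>
          SPG.inter_neighborSet_subsingleton_of_maximal hM₁ (Set.disjoint_right.1 hdisj hw)
            ⟨hu, hwu⟩ ⟨hu', hwu'⟩
    · exact Or.inl ⟨⟨hdisj, fun u hu w hw huw => hedge ⟨u, hu, w, hw, huw⟩⟩,
        fun hP₂ => hedge hP₂.2.1, hnP₃⟩
  · obtain ⟨x, hx₁, hx₂⟩ := Set.not_disjoint_iff.1 hdisj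
    refine Or.inr (Or.inr ⟨fun hP₁ => hdisj hP₁.1, fun hP₂ => hdisj hP₂.1, x, ?_⟩)
    exact (SPG.inter_subsingleton_of_maximal hM₁ hM₂ hne).eq_singleton_of_mem ⟨hx₁, hx₂⟩

/-- trichotomy for a pair of distinct maximal cliques. -/
theorem stmt_3 {V : Type*} (G : SimpleGraph V) (a b : V) (hab : a ≠ b)
    (K₁ K₂ : Set (Geodesic G a b))
    (hK₁ : (SPG G a b).IsClique K₁)
    (hmax₁ : ∀ K', (SPG G a b).IsClique K' → K₁ ⊆ K' → K' = K₁)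
    (hK₂ : (SPG G a b).IsClique K₂)
    (hmax₂ : ∀ K', (SPG G a b).IsClique K' → K₂ ⊆ K' → K' = K₂)
    (hne : K₁ ≠ K₂) :
    let P₁ : Prop := Disjoint K₁ K₂ ∧ ∀ u ∈ K₁, ∀ w ∈ K₂, ¬ (SPG G a b).Adj u w
    let P₂ : Prop := Disjoint K₁ K₂ ∧ (∃ u ∈ K₁, ∃ w ∈ K₂, (SPG G a b).Adj u w) ∧
      (∀ u ∈ K₁, ∀ w ∈ K₂, ∀ w' ∈ K₂, (SPG G a b).Adj u w → (SPG G a b).Adj u w' → w = w') ∧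
      (∀ w ∈ K₂, ∀ u ∈ K₁, ∀ u' ∈ K₁, (SPG G a b).Adj w u → (SPG G a b).Adj w u' → u = u')
    let P₃ : Prop := ∃ x, K₁ ∩ K₂ = {x}
    (P₁ ∧ ¬P₂ ∧ ¬P₃) ∨ (¬P₁ ∧ P₂ ∧ ¬P₃) ∨ (¬P₁ ∧ ¬P₂ ∧ P₃) :=
  stmt_3_general G a b K₁ K₂ hK₁ hmax₁ hK₂ hmax₂ hne
end

section
/- Let K₁ and K₂ be distinct maximal cliques in a shortest path graph H = S(G,a,b) that share exactly one vertex, and assume each of K₁, K₂ has at least one edge. Then the difference index of K₁ is distinct from the difference index of K₂, where the difference index of a maximal clique with an edge is the common index level at which every pair of distinct geodesics in the clique differs. -/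
/-! If both difference indices equal `i`, pick `W ∈ K₂` other than the shared vertex `x`.
Every `P ∈ K₁` agrees with `x` off level `i`, and so does `W`; hence `P` and `W` differ at
level `i` only, so `K₁ ∪ {W}` is a strictly larger clique. -/

open SimpleGraph

variable {V : Type*}

namespace SimpleGraph

theorem mem_of_isClique_of_forall_adj {α : Type*} {G : SimpleGraph α} {K : Set α}
    (hK : G.IsClique K) (hmax : ∀ K', G.IsClique K' → K ⊆ K' → K' = K) {w : α}
    (hw : ∀ v ∈ K, v ≠ w → G.Adj v w) : w ∈ K :=
  hmax _ (hK.insert fun v hv hwv => (hw v hv hwv.symm).symm) (Set.subset_insert w K) ▸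
    Set.mem_insert w K

end SimpleGraph

section diffIndices

variable {G : SimpleGraph V} {a b : V}

theorem diffIndices_self (U : Geodesic G a b) : diffIndices G a b U U = ∅ :=
  Set.eq_empty_of_forall_notMem fun _ h => h rfl

theorem diffIndices_nonempty {U W : Geodesic G a b} (h : U ≠ W) :
    (diffIndices G a b U W).Nonempty := by
  by_contra hc
  refine h (Subtype.ext (Walk.ext_support (List.ext_getElem? fun i => ?_)))
  by_contra hi
  exact hc ⟨i, hi⟩

theorem diffIndices_subset_union (U X W : Geodesic G a b) :
    diffIndices G a b U W ⊆ diffIndices G a b U X ∪ diffIndices G a b X W := by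
  intro i hi
  by_contra h
  rw [Set.mem_union, not_or] at h
  exact hi ((not_not.mp h.1).trans (not_not.mp h.2))

theorem diffIndices_eq_singleton_of_subset {U X W : Geodesic G a b} {i : ℕ} (hUW : U ≠ W)
    (hUX : diffIndices G a b U X ⊆ {i}) (hXW : diffIndices G a b X W ⊆ {i}) :
    diffIndices G a b U W = {i} :=
  (diffIndices_nonempty hUW).subset_singleton_iff.mp <|
    (diffIndices_subset_union U X W).trans (Set.union_subset hUX hXW)

theorem diffIndices_subset_of_pairwise_eq {K : Set (Geodesic G a b)} {i : ℕ}
    (hK : ∀ U ∈ K, ∀ W ∈ K, U ≠ W → diffIndices G a b U W = {i})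
    {U W : Geodesic G a b} (hU : U ∈ K) (hW : W ∈ K) : diffIndices G a b U W ⊆ {i} := by
  obtain rfl | hUW := eq_or_ne U W
  · simp [diffIndices_self]
  · exact (hK U hU W hW hUW).subset

theorem SPG_adj_of_diffIndices_eq_singleton {U W : Geodesic G a b} {i : ℕ}
    (h : diffIndices G a b U W = {i}) : (SPG G a b).Adj U W :=
  show ∃! j, j ∈ diffIndices G a b U W from h ▸ ⟨i, rfl, fun _ => id⟩

end diffIndices

theorem stmt_4_general {V : Type*} (G : SimpleGraph V) (a b : V)
    (K₁ K₂ : Set (Geodesic G a b))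
    (hK₁ : (SPG G a b).IsClique K₁)
    (hmax₁ : ∀ K', (SPG G a b).IsClique K' → K₁ ⊆ K' → K' = K₁)
    (x : Geodesic G a b) (hshare : K₁ ∩ K₂ = {x})
    (hedge₂ : ∃ U ∈ K₂, ∃ W ∈ K₂, U ≠ W)
    (i₁ i₂ : ℕ)
    (hi₁ : ∀ U ∈ K₁, ∀ W ∈ K₁, U ≠ W → diffIndices G a b U W = {i₁})
    (hi₂ : ∀ U ∈ K₂, ∀ W ∈ K₂, U ≠ W → diffIndices G a b U W = {i₂}) :
    i₁ ≠ i₂ := by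
  rintro rfl
  have hx : x ∈ K₁ ∩ K₂ := hshare ▸ rfl
  obtain ⟨W, hW, hWx⟩ := Set.Nontrivial.exists_ne hedge₂ x
  have hW₁ : W ∉ K₁ := fun h => hWx (hshare ▸ Set.mem_inter h hW : W ∈ ({x} : Set _))
  refine hW₁ (mem_of_isClique_of_forall_adj hK₁ hmax₁ fun P hP hPW => ?_)
  exact SPG_adj_of_diffIndices_eq_singleton <| diffIndices_eq_singleton_of_subset hPW
    (diffIndices_subset_of_pairwise_eq hi₁ hP hx.1) (diffIndices_subset_of_pairwise_eq hi₂ hx.2 hW)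

/-- maximal cliques sharing a vertex have distinct difference indices. -/
theorem stmt_4 {V : Type*} (G : SimpleGraph V) (a b : V) (hab : a ≠ b)
    (K₁ K₂ : Set (Geodesic G a b))
    (hK₁ : (SPG G a b).IsClique K₁)
    (hmax₁ : ∀ K', (SPG G a b).IsClique K' → K₁ ⊆ K' → K' = K₁)
    (hK₂ : (SPG G a b).IsClique K₂)
    (hmax₂ : ∀ K', (SPG G a b).IsClique K' → K₂ ⊆ K' → K' = K₂)
    (hne : K₁ ≠ K₂) (x : Geodesic G a b) (hshare : K₁ ∩ K₂ = {x})
    (hedge₁ : ∃ U ∈ K₁, ∃ W ∈ K₁, U ≠ W) (hedge₂ : ∃ U ∈ K₂, ∃ W ∈ K₂, U ≠ W)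
    (i₁ i₂ : ℕ)
    (hi₁ : ∀ U ∈ K₁, ∀ W ∈ K₁, U ≠ W → diffIndices G a b U W = {i₁})
    (hi₂ : ∀ U ∈ K₂, ∀ W ∈ K₂, U ≠ W → diffIndices G a b U W = {i₂}) :
    i₁ ≠ i₂ :=
  stmt_4_general G a b K₁ K₂ hK₁ hmax₁ x hshare hedge₂ i₁ i₂ hi₁ hi₂
end

section
/- A shortest path graph S(G,a,b) is a complete graph if and only if there exists a single index level i such that every pair of distinct (a,b)-geodesics in G differs exactly at index level i. -/
open SimpleGraph

variable {V : Type*}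

/-!
If `x` differs from `y` only at level `i` and from `z` only at level `j ≠ i`, then `y` and `z`
differ at both `i` and `j`. So when all pairs differ at a single level, two pairs sharing an
element differ at the same level, and any two pairs are linked through at most one intermediate
pair.
-/

section SingleDifference

variable {X ι α : Type*}

lemma setOf_ne_comm (f g : ι → α) : {i | f i ≠ g i} = {i | g i ≠ f i} := by
  simp only [ne_comm]

lemma symmDiff_setOf_ne_subset (f g h : ι → α) :
    symmDiff {i | f i ≠ g i} {i | f i ≠ h i} ⊆ {i | g i ≠ h i} := by
  rintro i (⟨hfg, hfh⟩ | ⟨hfh, hfg⟩)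
  · exact fun hgh => hfg ((not_not.mp hfh).trans hgh.symm)
  · exact fun hgh => hfh ((not_not.mp hfg).trans hgh)

variable (f : X → ι → α) (hsingle : ∀ x y, x ≠ y → ∃ i, {j | f x j ≠ f y j} = {i})
include hsingle

lemma setOf_ne_eq_of_forall_ne_singleton {x y z : X} (hxy : x ≠ y) (hxz : x ≠ z) :
    {j | f x j ≠ f y j} = {j | f x j ≠ f z j} := by
  rcases eq_or_ne y z with rfl | hyz
  · rfl
  obtain ⟨i, hi⟩ := hsingle x y hxy
  obtain ⟨j, hj⟩ := hsingle x z hxz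
  obtain ⟨k, hk⟩ := hsingle y z hyz
  have hsub := symmDiff_setOf_ne_subset (f x) (f y) (f z)
  rw [hi, hj, hk] at hsub
  by_contra hne
  have hij : i ≠ j := fun h => hne (by rw [hi, hj, h])
  have hik : i = k := hsub (Or.inl ⟨rfl, hij⟩)
  have hjk : j = k := hsub (Or.inr ⟨rfl, hij.symm⟩)
  exact hij (hik.trans hjk.symm)

lemma exists_forall_ne_setOf_ne_eq_singleton [Nonempty ι] :
    ∃ i, ∀ x y, x ≠ y → {j | f x j ≠ f y j} = {i} := by
  by_cases hpair : ∃ u w : X, u ≠ w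
  · obtain ⟨u, w, huw⟩ := hpair
    obtain ⟨i, hi⟩ := hsingle u w huw
    refine ⟨i, fun x y hxy => ?_⟩
    rcases eq_or_ne x u with rfl | hxu
    · rw [setOf_ne_eq_of_forall_ne_singleton f hsingle hxy huw, hi]
    · rw [setOf_ne_eq_of_forall_ne_singleton f hsingle hxy hxu, setOf_ne_comm,
        setOf_ne_eq_of_forall_ne_singleton f hsingle hxu.symm huw, hi]
  · exact ⟨Classical.arbitrary ι, fun x y hxy => (hpair ⟨x, y, hxy⟩).elim⟩

end SingleDifference

theorem stmt_7_general {V : Type*} (G : SimpleGraph V) (a b : V) :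
    (∀ U W : Geodesic G a b, U ≠ W → (SPG G a b).Adj U W) ↔
      ∃ i : ℕ, ∀ U W : Geodesic G a b, U ≠ W → diffIndices G a b U W = {i} := by
  constructor
  · intro hcomplete
    exact exists_forall_ne_setOf_ne_eq_singleton (fun (U : Geodesic G a b) i => U.1.support[i]?)
      fun U W hUW => Set.singleton_iff_unique_mem.mpr (hcomplete U W hUW)
  · rintro ⟨i, hi⟩ U W hUW
    exact Set.singleton_iff_unique_mem.mp ⟨i, hi U W hUW⟩

/-- `S(G,a,b)` is complete iff all geodesics pairwise differ at one common index. -/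
theorem stmt_7 {V : Type*} (G : SimpleGraph V) (a b : V) (hab : a ≠ b)
    (hne : Nonempty (Geodesic G a b)) :
    (∀ U W : Geodesic G a b, U ≠ W → (SPG G a b).Adj U W) ↔
      ∃ i : ℕ, ∀ U W : Geodesic G a b, U ≠ W → diffIndices G a b U W = {i} :=
  stmt_7_general G a b
end

section
/- In any induced 4-cycle of a shortest path graph, the multiset of difference indices of the four edges consists of exactly two distinct values, and these values alternate around the cycle: opposite edges of the 4-cycle have equal difference indices and consecutive edges have distinct difference indices. -/
open SimpleGraph

variable {V : Type*}

/-!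
Difference sets obey a triangle rule `D(U, W) ⊆ D(U, X) ∪ D(X, W)`, and a non-adjacent pair of
distinct geodesics differs at two or more levels. With `D(Uₖ, Uₖ₊₁) = {iₖ}`, the diagonal
`D(U₀, U₂) ⊆ {i₃, i₂}` then forces `i₂ ≠ i₃`, and the diagonal `D(U₁, U₃)`, which lies in both
`{i₁, i₂}` and `{i₀, i₃}`, forces `i₀ = i₂` and `i₁ = i₃`.
-/

section

variable {G : SimpleGraph V} {a b : V}

theorem diffIndices_comm (U W : Geodesic G a b) :
    diffIndices G a b U W = diffIndices G a b W U :=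
  Set.ext fun _ => ne_comm

theorem diffIndices_eq_empty_iff {U W : Geodesic G a b} :
    diffIndices G a b U W = ∅ ↔ U = W := by
  refine ⟨fun h => Subtype.ext <| Walk.ext_support <| List.ext_getElem? fun i => ?_,
    fun h => h ▸ Set.eq_empty_of_forall_notMem fun _ hi => hi rfl⟩
  by_contra hi
  exact h.subset hi

theorem diffIndices_subset_pair {U X W : Geodesic G a b} {i j : ℕ}
    (hUX : diffIndices G a b U X = {i}) (hXW : diffIndices G a b X W = {j}) :
    diffIndices G a b U W ⊆ {i, j} := by
  simpa only [hUX, hXW, Set.singleton_union] using diffIndices_subset_union U X W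

theorem SPG.adj_iff_s8 {U W : Geodesic G a b} :
    (SPG G a b).Adj U W ↔ ∃ i, diffIndices G a b U W = {i} :=
  ⟨fun ⟨i, hi, hu⟩ => ⟨i, Set.eq_singleton_iff_unique_mem.mpr ⟨hi, hu⟩⟩,
    fun ⟨i, hi⟩ => ⟨i, Set.eq_singleton_iff_unique_mem.mp hi⟩⟩

theorem SPG.nontrivial_diffIndices_of_not_adj {U W : Geodesic G a b} (hne : U ≠ W)
    (hadj : ¬ (SPG G a b).Adj U W) : (diffIndices G a b U W).Nontrivial :=
  (Set.nonempty_iff_ne_empty.mpr (diffIndices_eq_empty_iff.not.mpr hne))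
    |>.exists_eq_singleton_or_nontrivial.resolve_left (SPG.adj_iff_s8.not.mp hadj)

end

theorem Set.Nontrivial.ne_of_subset_pair {α : Type*} {s : Set α} {x y : α}
    (hs : s.Nontrivial) (h : s ⊆ {x, y}) : x ≠ y := by
  rintro rfl
  exact hs.not_subset_singleton (by simpa using h)

theorem Set.Nontrivial.eq_and_eq_of_subset_pairs {α : Type*} {s : Set α} {x₀ x₁ x₂ x₃ : α}
    (hs : s.Nontrivial) (h₁₂ : s ⊆ {x₁, x₂}) (h₀₃ : s ⊆ {x₀, x₃}) (h₂₃ : x₂ ≠ x₃) :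
    x₀ = x₂ ∧ x₁ = x₃ := by
  obtain ⟨p, hp, q, hq, hpq⟩ := hs
  rw [Set.subset_pair_iff] at h₁₂ h₀₃
  grind

theorem stmt_8_general {V : Type*} (G : SimpleGraph V) (a b : V)
    (U₀ U₁ U₂ U₃ : Geodesic G a b) (h02 : U₀ ≠ U₂) (h13 : U₁ ≠ U₃)
    (e01 : (SPG G a b).Adj U₀ U₁) (e12 : (SPG G a b).Adj U₁ U₂)
    (e23 : (SPG G a b).Adj U₂ U₃) (e30 : (SPG G a b).Adj U₃ U₀)
    (n02 : ¬ (SPG G a b).Adj U₀ U₂) (n13 : ¬ (SPG G a b).Adj U₁ U₃) :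
    ∃ i j : ℕ, i ≠ j ∧
      diffIndices G a b U₀ U₁ = {i} ∧ diffIndices G a b U₁ U₂ = {j} ∧
      diffIndices G a b U₂ U₃ = {i} ∧ diffIndices G a b U₃ U₀ = {j} := by
  obtain ⟨i₀, d01⟩ := SPG.adj_iff_s8.mp e01
  obtain ⟨i₁, d12⟩ := SPG.adj_iff_s8.mp e12
  obtain ⟨i₂, d23⟩ := SPG.adj_iff_s8.mp e23
  obtain ⟨i₃, d30⟩ := SPG.adj_iff_s8.mp e30
  have d03 : diffIndices G a b U₀ U₃ = {i₃} := diffIndices_comm U₀ U₃ ▸ d30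
  have d32 : diffIndices G a b U₃ U₂ = {i₂} := diffIndices_comm U₃ U₂ ▸ d23
  have d10 : diffIndices G a b U₁ U₀ = {i₀} := diffIndices_comm U₁ U₀ ▸ d01
  have hne : i₃ ≠ i₂ :=
    (SPG.nontrivial_diffIndices_of_not_adj h02 n02).ne_of_subset_pair
      (diffIndices_subset_pair d03 d32)
  obtain ⟨rfl, rfl⟩ := (SPG.nontrivial_diffIndices_of_not_adj h13 n13).eq_and_eq_of_subset_pairs
    (diffIndices_subset_pair d12 d23) (diffIndices_subset_pair d10 d03) hne.symm
  exact ⟨i₀, i₁, hne.symm, d01, d12, d23, d30⟩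

/-- difference indices alternate around an induced 4-cycle. -/
theorem stmt_8 {V : Type*} (G : SimpleGraph V) (a b : V) (hab : a ≠ b)
    (U₀ U₁ U₂ U₃ : Geodesic G a b) (h02 : U₀ ≠ U₂) (h13 : U₁ ≠ U₃)
    (e01 : (SPG G a b).Adj U₀ U₁) (e12 : (SPG G a b).Adj U₁ U₂)
    (e23 : (SPG G a b).Adj U₂ U₃) (e30 : (SPG G a b).Adj U₃ U₀)
    (n02 : ¬ (SPG G a b).Adj U₀ U₂) (n13 : ¬ (SPG G a b).Adj U₁ U₃) :
    ∃ i j : ℕ, i ≠ j ∧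
      diffIndices G a b U₀ U₁ = {i} ∧ diffIndices G a b U₁ U₂ = {j} ∧
      diffIndices G a b U₂ U₃ = {i} ∧ diffIndices G a b U₃ U₀ = {j} :=
  stmt_8_general G a b U₀ U₁ U₂ U₃ h02 h13 e01 e12 e23 e30 n02 n13
end

section
/- If H₁ = S(G₁,a₁,b₁) and H₂ = S(G₂,a₂,b₂) are shortest path graphs, then their disjoint union H₁ ∪ H₂ is also a shortest path graph: there exist a graph G and vertices a,b such that S(G,a,b) is isomorphic to the disjoint union of H₁ and H₂. -/
open SimpleGraph

variable {V : Type*}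

/-!
Put the two graphs side by side and add a new source joined to `a₁, a₂` and a new sink joined
to `b₁, b₂`. When `d(a₁, b₁) = d(a₂, b₂)`, every geodesic of the new graph is a geodesic of `G₁`
or of `G₂` framed by the source and the sink, so its index levels are those of the old geodesic
shifted by one and adjacency is preserved; geodesics coming from different sides differ at
levels `1` and `2`, so they are never adjacent. The distances are equalised beforehand by
attaching new vertices one at a time in front of `a₁` or `a₂`, which again only shifts index
levels. If one side has no geodesic at all, the other graph already works.
-/

universe u

theorem List.getElem?_append_map_append_ne_iff {α β : Type*} {f : α → β}
    (hf : Function.Injective f) (l₁ l₂ : List β) {s t : List α} (hst : s.length = t.length)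
    (i : ℕ) :
    (l₁ ++ s.map f ++ l₂)[i]? ≠ (l₁ ++ t.map f ++ l₂)[i]? ↔
      l₁.length ≤ i ∧ s[i - l₁.length]? ≠ t[i - l₁.length]? := by
  rcases lt_or_ge i l₁.length with hi | hi
  · simp [List.getElem?_append_left, hi]
  obtain ⟨j, rfl⟩ := Nat.exists_eq_add_of_le hi
  rcases lt_or_ge j s.length with hj | hj
  · simp [List.getElem?_append, hj, hst ▸ hj, hf.eq_iff]
  · rw [hst] at hj
    simp [List.getElem?_append, hst, hj]

theorem existsUnique_iff_of_shift {p q : ℕ → Prop} (k : ℕ) (h : ∀ i, p i ↔ k ≤ i ∧ q (i - k)) :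
    (∃! i, p i) ↔ ∃! i, q i := by
  have hshift : ∀ j, p (k + j) ↔ q j := by simp [h]
  constructor
  · rintro ⟨i, hi, hu⟩
    obtain ⟨hk, hq⟩ := (h i).1 hi
    refine ⟨i - k, hq, fun j hj => ?_⟩
    have := hu _ ((hshift j).2 hj)
    omega
  · rintro ⟨j, hj, hu⟩
    refine ⟨k + j, (hshift j).2 hj, fun i hi => ?_⟩
    obtain ⟨hk, hq⟩ := (h i).1 hi
    have := hu _ hq
    omega

variable {W : Type*} {G : SimpleGraph V} {G' : SimpleGraph W}

theorem Geodesic.length_support {a b : V} (U : Geodesic G a b) :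
    U.1.support.length = G.dist a b + 1 := by
  rw [Walk.length_support, U.2.2]

theorem spg_adj_iff_of_support_eq {a b : V} {a' b' : W} {f : V → W} (hf : Function.Injective f)
    (l₁ l₂ : List W) {U U' : Geodesic G a b} {P P' : Geodesic G' a' b'}
    (hP : P.1.support = l₁ ++ U.1.support.map f ++ l₂)
    (hP' : P'.1.support = l₁ ++ U'.1.support.map f ++ l₂) :
    (SPG G' a' b').Adj P P' ↔ (SPG G a b).Adj U U' := by
  refine existsUnique_iff_of_shift l₁.length fun i => ?_
  simp only [diffIndices, Set.mem_ofPred_eq, hP, hP']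
  exact List.getElem?_append_map_append_ne_iff hf l₁ l₂
    (by rw [U.length_support, U'.length_support]) i

theorem Geodesic.eq_of_support_eq {a b : V} {a' b' : W} {f : V → W} (hf : Function.Injective f)
    (l₁ l₂ : List W) {U U' : Geodesic G a b} {P P' : Geodesic G' a' b'}
    (hP : P.1.support = l₁ ++ U.1.support.map f ++ l₂)
    (hP' : P'.1.support = l₁ ++ U'.1.support.map f ++ l₂) (h : P = P') : U = U' := by
  rw [h, hP'] at hP
  exact Subtype.ext (Walk.support_injective ((List.map_injective_iff.2 hf)
    (List.append_cancel_left (List.append_cancel_right hP)).symm))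

namespace SimpleGraph

theorem Walk.exists_eq_map_of_forall_mem_range (f : G ↪g G') {x y : V}
    (p : G'.Walk (f x) (f y)) (hp : ∀ w ∈ p.support, w ∈ Set.range f) :
    ∃ q : G.Walk x y, p = q.map f.toHom := by
  suffices ∀ {u v : W} (p : G'.Walk u v), (∀ w ∈ p.support, w ∈ Set.range f) →
      ∀ x y (hx : f x = u) (hy : f y = v), ∃ q : G.Walk x y, p = (q.map f.toHom).copy hx hy from
    this p hp x y rfl rfl
  intro u v p
  induction p with
  | nil =>
    rintro - x y rfl hy
    obtain rfl := f.injective hy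
    exact ⟨nil, rfl⟩
  | cons h p ih =>
    rintro hp x y rfl rfl
    obtain ⟨z, rfl⟩ := hp _ (List.mem_cons_of_mem _ p.start_mem_support)
    obtain ⟨q, rfl⟩ := ih (fun w hw => hp w (by simp [hw])) z y rfl rfl
    exact ⟨cons (f.map_adj_iff.1 h) q, rfl⟩

variable {H : SimpleGraph W}

-- Reducible, unlike `Embedding.sumInl.toHom`, so that `rw` and `simp` can work inside walks
-- mapped along it: their endpoints must unfold to `Sum.inl x` at reducible transparency.
abbrev Hom.sumInl : G →g G ⊕g H where
  toFun := Sum.inl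
  map_rel' h := h

abbrev Hom.sumInr : H →g G ⊕g H where
  toFun := Sum.inr
  map_rel' h := h

theorem Walk.exists_eq_map_sumInl {x y : V} (p : (G ⊕g H).Walk (.inl x) (.inl y)) :
    ∃ q : G.Walk x y, p = q.map Hom.sumInl := by
  refine p.exists_eq_map_of_forall_mem_range Embedding.sumInl fun w hw => ?_
  obtain ⟨q, -, -⟩ := mem_support_iff_exists_append.1 hw
  cases w with
  | inl w => exact ⟨w, rfl⟩
  | inr w => exact absurd ⟨q⟩ (not_reachable_sum_inl_inr _ _)

theorem Walk.exists_eq_map_sumInr {x y : W} (p : (G ⊕g H).Walk (.inr x) (.inr y)) :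
    ∃ q : H.Walk x y, p = q.map Hom.sumInr := by
  refine p.exists_eq_map_of_forall_mem_range Embedding.sumInr fun w hw => ?_
  obtain ⟨q, -, -⟩ := mem_support_iff_exists_append.1 hw
  cases w with
  | inl w => exact absurd ⟨q.reverse⟩ (not_reachable_sum_inl_inr _ _)
  | inr w => exact ⟨w, rfl⟩

def addVertex (G : SimpleGraph V) (S : Set V) : SimpleGraph (Option V) where
  Adj
    | some u, some v => G.Adj u v
    | none, some v => v ∈ S
    | some u, none => u ∈ S
    | none, none => False
  symm := by
    constructor
    rintro (_ | u) (_ | v) h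
    exacts [h, h, h, h.symm]
  loopless := by
    constructor
    rintro (_ | u) h
    exacts [h, G.loopless.irrefl u h]

section addVertex

variable (G) (S : Set V)

-- Reducible for the same reason as `Hom.sumInl`.
abbrev addVertexHom : G →g G.addVertex S where
  toFun := some
  map_rel' h := h

@[simp] theorem coe_addVertexHom : ⇑(G.addVertexHom S) = some := rfl

theorem addVertexHom_injective : Function.Injective (G.addVertexHom S) := Option.some_injective V

variable {G S}

theorem Walk.exists_eq_cons_map_of_isPath {v : V} (p : (G.addVertex S).Walk none (some v))
    (hp : p.IsPath) : ∃ (s : V) (h : (G.addVertex S).Adj none (some s)) (q : G.Walk s v),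
      p = cons h (q.map (G.addVertexHom S)) := by
  cases p with
  | @cons _ w _ h p =>
    cases w with
    | none => exact (h : False).elim
    | some s =>
      have hnone : none ∉ p.support := ((Walk.cons_isPath_iff _ _).1 hp).2
      obtain ⟨q, rfl⟩ := p.exists_eq_map_of_forall_mem_range
        (⟨Function.Embedding.some, Iff.rfl⟩ : G ↪g G.addVertex S) fun w hw => by
          cases w with
          | none => exact absurd hw hnone
          | some w => exact ⟨w, rfl⟩
      exact ⟨s, h, q, rfl⟩

theorem Walk.exists_eq_concat_map_of_isPath {u : V} (p : (G.addVertex S).Walk (some u) none)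
    (hp : p.IsPath) : ∃ (t : V) (h : (G.addVertex S).Adj (some t) none) (q : G.Walk u t),
      p = (q.map (G.addVertexHom S)).concat h := by
  obtain ⟨t, h, q, hq⟩ := p.reverse.exists_eq_cons_map_of_isPath hp.reverse
  refine ⟨t, h.symm, q.reverse, ?_⟩
  rw [← p.reverse_reverse, hq, Walk.reverse_cons, Walk.reverse_map]
  rfl

end addVertex

theorem dist_eq_of_forall_isPath_le {u v : V} {n : ℕ} (p₀ : G.Walk u v) (hp₀ : p₀.length = n)
    (h : ∀ p : G.Walk u v, p.IsPath → n ≤ p.length) : G.dist u v = n := by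
  refine le_antisymm (hp₀ ▸ G.dist_le p₀) ?_
  obtain ⟨p, hp, hlen⟩ := Reachable.exists_path_of_dist ⟨p₀⟩
  exact hlen ▸ h p hp

section pad

variable {a b : V}

def Walk.addVertexCons (q : G.Walk a b) : (G.addVertex {a}).Walk none (some b) :=
  cons (show (G.addVertex {a}).Adj none (some a) from rfl) (q.map (G.addVertexHom {a}))

@[simp] theorem Walk.length_addVertexCons (q : G.Walk a b) :
    q.addVertexCons.length = q.length + 1 := by
  simp [Walk.addVertexCons]

-- Stated in the shape `spg_adj_iff_of_support_eq` consumes.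
theorem Walk.support_addVertexCons (q : G.Walk a b) :
    q.addVertexCons.support = [none] ++ q.support.map some ++ [] := by
  simp [Walk.addVertexCons]

@[simp] theorem Walk.isPath_addVertexCons_iff (q : G.Walk a b) :
    q.addVertexCons.IsPath ↔ q.IsPath := by
  simp [Walk.addVertexCons, Walk.cons_isPath_iff,
    Walk.isPath_map_iff_of_injective (addVertexHom_injective G _)]

theorem Walk.exists_eq_addVertexCons {p : (G.addVertex {a}).Walk none (some b)}
    (hp : p.IsPath) : ∃ q : G.Walk a b, p = q.addVertexCons := by
  obtain ⟨s, h, q, rfl⟩ := p.exists_eq_cons_map_of_isPath hp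
  obtain rfl : s = a := h
  exact ⟨q, rfl⟩

theorem dist_addVertex_singleton (hr : G.Reachable a b) :
    (G.addVertex {a}).dist none (some b) = G.dist a b + 1 := by
  obtain ⟨q, -, hq⟩ := hr.exists_path_of_dist
  refine dist_eq_of_forall_isPath_le q.addVertexCons (by simp [hq]) fun p hp => ?_
  obtain ⟨q', rfl⟩ := Walk.exists_eq_addVertexCons hp
  simpa using G.dist_le q'

def Geodesic.addVertexCons (U : Geodesic G a b) : Geodesic (G.addVertex {a}) none (some b) :=
  ⟨U.1.addVertexCons, by simpa using U.2.1, by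
    rw [Walk.length_addVertexCons, dist_addVertex_singleton ⟨U.1⟩, U.2.2]⟩

theorem Geodesic.addVertexCons_bijective :
    Function.Bijective (Geodesic.addVertexCons : Geodesic G a b → _) := by
  constructor
  · exact fun U U' => Geodesic.eq_of_support_eq (Option.some_injective V) _ _
      (Walk.support_addVertexCons _) (Walk.support_addVertexCons _)
  · rintro ⟨p, hp, hlen⟩
    obtain ⟨q, rfl⟩ := Walk.exists_eq_addVertexCons hp
    rw [Walk.length_addVertexCons, dist_addVertex_singleton ⟨q⟩, Nat.add_right_cancel_iff] at hlen
    exact ⟨⟨q, by simpa using hp, hlen⟩, rfl⟩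

noncomputable def Geodesic.addVertexIso : SPG G a b ≃g SPG (G.addVertex {a}) none (some b) where
  toEquiv := .ofBijective _ Geodesic.addVertexCons_bijective
  map_rel_iff' := spg_adj_iff_of_support_eq (Option.some_injective V) _ _
    (Walk.support_addVertexCons _) (Walk.support_addVertexCons _)

end pad

-- New source `none` joined to `S` and new sink `some none` joined to `T`.
abbrev addTerminals (G : SimpleGraph V) (S T : Set V) : SimpleGraph (Option (Option V)) :=
  (G.addVertex T).addVertex (some '' S)

section addTerminals

variable {S T : Set V} {s t : V}

def Walk.addTerminals (q : G.Walk s t) (hs : s ∈ S) (ht : t ∈ T) :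
    (G.addTerminals S T).Walk none (some none) :=
  cons (show (G.addTerminals S T).Adj none
      ((G.addVertex T).addVertexHom _ (G.addVertexHom T s)) from ⟨s, hs, rfl⟩)
    (((q.map (G.addVertexHom T)).concat
      (show (G.addVertex T).Adj (G.addVertexHom T t) none from ht)).map
        ((G.addVertex T).addVertexHom _))

@[simp] theorem Walk.length_addTerminals (q : G.Walk s t) (hs : s ∈ S) (ht : t ∈ T) :
    (q.addTerminals hs ht).length = q.length + 2 := by
  simp [Walk.addTerminals]

theorem Walk.support_addTerminals (q : G.Walk s t) (hs : s ∈ S) (ht : t ∈ T) :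
    (q.addTerminals hs ht).support = [none] ++ q.support.map (some ∘ some) ++ [some none] := by
  simp [Walk.addTerminals, Walk.support_concat]

@[simp] theorem Walk.isPath_addTerminals_iff (q : G.Walk s t) (hs : s ∈ S) (ht : t ∈ T) :
    (q.addTerminals hs ht).IsPath ↔ q.IsPath := by
  have hinj : Function.Injective (some ∘ some : V → Option (Option V)) :=
    (Option.some_injective _).comp (Option.some_injective _)
  rw [Walk.isPath_def, Walk.support_addTerminals, Walk.isPath_def]
  simp [List.nodup_append, List.nodup_map_iff hinj]

theorem Walk.exists_eq_addTerminals {p : (G.addTerminals S T).Walk none (some none)}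
    (hp : p.IsPath) : ∃ (s t : V) (hs : s ∈ S) (ht : t ∈ T) (q : G.Walk s t),
      p = q.addTerminals hs ht := by
  obtain ⟨_, ⟨s, hs, rfl⟩, p, rfl⟩ := p.exists_eq_cons_map_of_isPath hp
  obtain ⟨t, ht, q, rfl⟩ := p.exists_eq_concat_map_of_isPath
    ((Walk.cons_isPath_iff _ _).1 hp).1.of_map
  exact ⟨s, t, hs, ht, q, rfl⟩

end addTerminals

section parallel

variable {H : SimpleGraph W} {a₁ b₁ : V} {a₂ b₂ : W}

abbrev parallel (G : SimpleGraph V) (H : SimpleGraph W) (a₁ b₁ : V) (a₂ b₂ : W) :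
    SimpleGraph (Option (Option (V ⊕ W))) :=
  (G ⊕g H).addTerminals {.inl a₁, .inr a₂} {.inl b₁, .inr b₂}

variable (H a₂ b₂) in
def Walk.parallelInl (r : G.Walk a₁ b₁) : (parallel G H a₁ b₁ a₂ b₂).Walk none (some none) :=
  (r.map Hom.sumInl).addTerminals
    (show Hom.sumInl a₁ ∈ ({.inl a₁, .inr a₂} : Set (V ⊕ W)) from .inl rfl)
    (show Hom.sumInl b₁ ∈ ({.inl b₁, .inr b₂} : Set (V ⊕ W)) from .inl rfl)

variable (G a₁ b₁) in
def Walk.parallelInr (r : H.Walk a₂ b₂) : (parallel G H a₁ b₁ a₂ b₂).Walk none (some none) :=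
  (r.map Hom.sumInr).addTerminals
    (show Hom.sumInr a₂ ∈ ({.inl a₁, .inr a₂} : Set (V ⊕ W)) from .inr rfl)
    (show Hom.sumInr b₂ ∈ ({.inl b₁, .inr b₂} : Set (V ⊕ W)) from .inr rfl)

theorem Walk.support_parallelInl (r : G.Walk a₁ b₁) :
    (r.parallelInl H a₂ b₂).support =
      [none] ++ r.support.map (some ∘ some ∘ Sum.inl) ++ [some none] := by
  rw [Walk.parallelInl, Walk.support_addTerminals, Walk.support_map, List.map_map]
  rfl

theorem Walk.support_parallelInr (r : H.Walk a₂ b₂) :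
    (r.parallelInr G a₁ b₁).support =
      [none] ++ r.support.map (some ∘ some ∘ Sum.inr) ++ [some none] := by
  rw [Walk.parallelInr, Walk.support_addTerminals, Walk.support_map, List.map_map]
  rfl

@[simp] theorem Walk.length_parallelInl (r : G.Walk a₁ b₁) :
    (r.parallelInl H a₂ b₂).length = r.length + 2 := by
  simp [Walk.parallelInl]

@[simp] theorem Walk.length_parallelInr (r : H.Walk a₂ b₂) :
    (r.parallelInr G a₁ b₁).length = r.length + 2 := by
  simp [Walk.parallelInr]

@[simp] theorem Walk.isPath_parallelInl_iff (r : G.Walk a₁ b₁) :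
    (r.parallelInl H a₂ b₂).IsPath ↔ r.IsPath := by
  simp [Walk.parallelInl, Walk.isPath_map_iff_of_injective (f := Hom.sumInl) Sum.inl_injective]

@[simp] theorem Walk.isPath_parallelInr_iff (r : H.Walk a₂ b₂) :
    (r.parallelInr G a₁ b₁).IsPath ↔ r.IsPath := by
  simp [Walk.parallelInr, Walk.isPath_map_iff_of_injective (f := Hom.sumInr) Sum.inr_injective]

theorem Walk.exists_eq_parallelInl_or_parallelInr
    {p : (parallel G H a₁ b₁ a₂ b₂).Walk none (some none)} (hp : p.IsPath) :
    (∃ r : G.Walk a₁ b₁, p = r.parallelInl H a₂ b₂) ∨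
      ∃ r : H.Walk a₂ b₂, p = r.parallelInr G a₁ b₁ := by
  obtain ⟨s, t, hs, ht, q, rfl⟩ := Walk.exists_eq_addTerminals hp
  rcases hs with rfl | rfl <;> rcases ht with rfl | rfl
  · obtain ⟨r, rfl⟩ := q.exists_eq_map_sumInl
    exact .inl ⟨r, rfl⟩
  · exact absurd ⟨q⟩ (not_reachable_sum_inl_inr _ _)
  · exact absurd ⟨q.reverse⟩ (not_reachable_sum_inl_inr _ _)
  · obtain ⟨r, rfl⟩ := q.exists_eq_map_sumInr
    exact .inr ⟨r, rfl⟩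

theorem dist_parallel (hr₁ : G.Reachable a₁ b₁) (hd : G.dist a₁ b₁ = H.dist a₂ b₂) :
    (parallel G H a₁ b₁ a₂ b₂).dist none (some none) = G.dist a₁ b₁ + 2 := by
  obtain ⟨r, -, hr⟩ := hr₁.exists_path_of_dist
  refine dist_eq_of_forall_isPath_le (r.parallelInl H a₂ b₂) (by simp [hr]) fun p hp => ?_
  rcases Walk.exists_eq_parallelInl_or_parallelInr hp with ⟨r, rfl⟩ | ⟨r, rfl⟩
  · simpa using G.dist_le r
  · simpa [hd] using H.dist_le r

variable (H a₂ b₂) in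
def parallelGeodesic (hr₁ : G.Reachable a₁ b₁) (hd : G.dist a₁ b₁ = H.dist a₂ b₂) :
    Geodesic G a₁ b₁ ⊕ Geodesic H a₂ b₂ → Geodesic (parallel G H a₁ b₁ a₂ b₂) none (some none)
  | .inl U => ⟨U.1.parallelInl H a₂ b₂, by simpa using U.2.1, by
      rw [Walk.length_parallelInl, dist_parallel hr₁ hd, U.2.2]⟩
  | .inr U => ⟨U.1.parallelInr G a₁ b₁, by simpa using U.2.1, by
      rw [Walk.length_parallelInr, dist_parallel hr₁ hd, U.2.2, hd]⟩

theorem mem_diffIndices_parallelGeodesic_inl_inr (h₁ : a₁ ≠ b₁) (hr₁ : G.Reachable a₁ b₁)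
    (hd : G.dist a₁ b₁ = H.dist a₂ b₂) (U : Geodesic G a₁ b₁) (U' : Geodesic H a₂ b₂) {i : ℕ}
    (hi₁ : 1 ≤ i) (hi₂ : i ≤ 2) :
    i ∈ diffIndices _ _ _ (parallelGeodesic H a₂ b₂ hr₁ hd (.inl U))
      (parallelGeodesic H a₂ b₂ hr₁ hd (.inr U')) := by
  have hpos := hr₁.pos_dist_of_ne h₁
  obtain ⟨j, rfl⟩ := Nat.exists_eq_add_of_le' hi₁
  have hj : j ≤ U.1.length := by rw [U.2.2]; omega
  have hj' : j ≤ U'.1.length := by rw [U'.2.2, ← hd]; omega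
  simp [diffIndices, parallelGeodesic, Walk.support_parallelInl, Walk.support_parallelInr,
    List.getElem?_append, hj, hj']

theorem not_spg_adj_parallelGeodesic_inl_inr (h₁ : a₁ ≠ b₁) (hr₁ : G.Reachable a₁ b₁)
    (hd : G.dist a₁ b₁ = H.dist a₂ b₂) (U : Geodesic G a₁ b₁) (U' : Geodesic H a₂ b₂) :
    ¬(SPG _ _ _).Adj (parallelGeodesic H a₂ b₂ hr₁ hd (.inl U))
      (parallelGeodesic H a₂ b₂ hr₁ hd (.inr U')) := by
  rintro ⟨i, -, hi⟩
  have h1 := hi 1 (mem_diffIndices_parallelGeodesic_inl_inr h₁ hr₁ hd U U' le_rfl one_le_two)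
  have h2 := hi 2 (mem_diffIndices_parallelGeodesic_inl_inr h₁ hr₁ hd U U' one_le_two le_rfl)
  omega

theorem parallelGeodesic_bijective (h₁ : a₁ ≠ b₁) (hr₁ : G.Reachable a₁ b₁)
    (hd : G.dist a₁ b₁ = H.dist a₂ b₂) : Function.Bijective (parallelGeodesic H a₂ b₂ hr₁ hd) := by
  constructor
  · have hne : ∀ U U', parallelGeodesic H a₂ b₂ hr₁ hd (.inl U) ≠
        parallelGeodesic H a₂ b₂ hr₁ hd (.inr U') := fun U U' h =>
      mem_diffIndices_parallelGeodesic_inl_inr h₁ hr₁ hd U U' le_rfl one_le_two (by rw [h])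
    rintro (U | U) (U' | U') h
    · exact congrArg Sum.inl (Geodesic.eq_of_support_eq
        ((Option.some_injective _).comp ((Option.some_injective _).comp Sum.inl_injective)) _ _
        (Walk.support_parallelInl _) (Walk.support_parallelInl _) h)
    · exact absurd h (hne U U')
    · exact absurd h.symm (hne U' U)
    · exact congrArg Sum.inr (Geodesic.eq_of_support_eq
        ((Option.some_injective _).comp ((Option.some_injective _).comp Sum.inr_injective)) _ _
        (Walk.support_parallelInr _) (Walk.support_parallelInr _) h)
  · rintro ⟨p, hp, hlen⟩
    rw [dist_parallel hr₁ hd] at hlen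
    rcases Walk.exists_eq_parallelInl_or_parallelInr hp with ⟨r, rfl⟩ | ⟨r, rfl⟩
    · exact ⟨.inl ⟨r, by simpa using hp, by simpa using hlen⟩, rfl⟩
    · exact ⟨.inr ⟨r, by simpa using hp, by simpa [hd] using hlen⟩, rfl⟩

noncomputable def parallelIso (h₁ : a₁ ≠ b₁) (hr₁ : G.Reachable a₁ b₁)
    (hd : G.dist a₁ b₁ = H.dist a₂ b₂) :
    SPG G a₁ b₁ ⊕g SPG H a₂ b₂ ≃g SPG (parallel G H a₁ b₁ a₂ b₂) none (some none) where
  toEquiv := .ofBijective _ (parallelGeodesic_bijective h₁ hr₁ hd)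
  map_rel_iff' := by
    rintro (U | U) (U' | U')
    · exact spg_adj_iff_of_support_eq
        ((Option.some_injective _).comp ((Option.some_injective _).comp Sum.inl_injective)) _ _
        (Walk.support_parallelInl _) (Walk.support_parallelInl _)
    · exact iff_of_false (not_spg_adj_parallelGeodesic_inl_inr h₁ hr₁ hd U U') (by simp)
    · exact iff_of_false (fun h => not_spg_adj_parallelGeodesic_inl_inr h₁ hr₁ hd U' U h.symm)
        (by simp)
    · exact spg_adj_iff_of_support_eq
        ((Option.some_injective _).comp ((Option.some_injective _).comp Sum.inr_injective)) _ _
        (Walk.support_parallelInr _) (Walk.support_parallelInr _)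

end parallel


theorem exists_spg_iso_dist_eq_add {V : Type u} {G : SimpleGraph V} {a b : V} (hab : a ≠ b)
    (hr : G.Reachable a b) (k : ℕ) :
    ∃ (W : Type u) (G' : SimpleGraph W) (a' b' : W), a' ≠ b' ∧ G'.Reachable a' b' ∧
      G'.dist a' b' = G.dist a b + k ∧ Nonempty (SPG G' a' b' ≃g SPG G a b) := by
  induction k with
  | zero => exact ⟨V, G, a, b, hab, hr, rfl, ⟨.refl⟩⟩
  | succ k ih =>
    obtain ⟨W, G', a', b', -, hr', hdist, ⟨e⟩⟩ := ih
    refine ⟨Option W, G'.addVertex {a'}, none, some b', nofun, ?_, ?_,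
      ⟨Geodesic.addVertexIso.symm.trans e⟩⟩
    · obtain ⟨q⟩ := hr'
      exact ⟨q.addVertexCons⟩
    · rw [dist_addVertex_singleton hr', hdist, add_assoc]

def Iso.sumEmpty [IsEmpty W] : G ⊕g H ≃g G where
  toEquiv := Equiv.sumEmpty V W
  map_rel_iff' := by
    rintro (u | u) (v | v)
    · exact sum_adj_inl.symm
    all_goals exact isEmptyElim ‹W›

end SimpleGraph

/-- the disjoint union of two shortest path graphs is a shortest path graph. -/
theorem stmt_9 {V₁ V₂ : Type u} (G₁ : SimpleGraph V₁) (a₁ b₁ : V₁) (h₁ : a₁ ≠ b₁)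
    (G₂ : SimpleGraph V₂) (a₂ b₂ : V₂) (h₂ : a₂ ≠ b₂) :
    ∃ (W : Type u) (G : SimpleGraph W) (a b : W), a ≠ b ∧
      Nonempty (SPG G a b ≃g (SPG G₁ a₁ b₁ ⊕g SPG G₂ a₂ b₂)) := by
  by_cases hr₂ : G₂.Reachable a₂ b₂
  swap
  · have : IsEmpty (Geodesic G₂ a₂ b₂) := ⟨fun U => hr₂ ⟨U.1⟩⟩
    exact ⟨V₁, G₁, a₁, b₁, h₁, ⟨Iso.sumEmpty.symm⟩⟩
  by_cases hr₁ : G₁.Reachable a₁ b₁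
  swap
  · have : IsEmpty (Geodesic G₁ a₁ b₁) := ⟨fun U => hr₁ ⟨U.1⟩⟩
    exact ⟨V₂, G₂, a₂, b₂, h₂, ⟨Iso.sumEmpty.symm.trans Iso.sumComm⟩⟩
  obtain ⟨W₁, H₁, c₁, d₁, hc₁, hrc₁, hdist₁, ⟨e₁⟩⟩ :=
    exists_spg_iso_dist_eq_add h₁ hr₁ (G₂.dist a₂ b₂ - G₁.dist a₁ b₁)
  obtain ⟨W₂, H₂, c₂, d₂, -, -, hdist₂, ⟨e₂⟩⟩ :=
    exists_spg_iso_dist_eq_add h₂ hr₂ (G₁.dist a₁ b₁ - G₂.dist a₂ b₂)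
  -- One of the two truncated differences is `0`; both distances become the maximum.
  have hd : H₁.dist c₁ d₁ = H₂.dist c₂ d₂ := by omega
  exact ⟨_, parallel H₁ H₂ c₁ d₁ c₂ d₂, none, some none, nofun,
    ⟨(parallelIso hc₁ hrc₁ hd).symm.trans (e₁.sumCongr e₂)⟩⟩
end

section
/- If H = S(G,a,b) is a shortest path graph with d_G(a,b) = n, then for every n' ≥ n there exists a graph G' with vertices a, b' such that d_{G'}(a,b') = n' and S(G',a,b') is isomorphic to H. -/
open SimpleGraph

variable {V : Type*}

/-!
Attach a new pendant vertex to `b`. Every shortest path from `a` to the new vertex is a shortest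
`(a,b)`-path followed by the pendant edge, so the distance grows by one while the geodesics, and
the index levels at which two of them differ, are unchanged. Repeating this `n' - n` times gives
the required graph.
-/

namespace SimpleGraph

variable {G : SimpleGraph V} {a b u v : V}

def addPendant (G : SimpleGraph V) (b : V) : SimpleGraph (Option V) :=
  G.map Function.Embedding.some ⊔ edge (some b) none

@[simp]
lemma addPendant_adj_some_some : (G.addPendant b).Adj (some u) (some v) ↔ G.Adj u v := by
  simp only [addPendant, sup_adj, map_adj, edge_adj]; simp

@[simp]
lemma addPendant_adj_none_left {x : Option V} : (G.addPendant b).Adj none x ↔ x = some b := by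
  cases x <;> simp only [addPendant, sup_adj, map_adj, edge_adj] <;> simp [eq_comm]

@[simp]
lemma addPendant_adj_none_right {x : Option V} : (G.addPendant b).Adj x none ↔ x = some b := by
  rw [adj_comm, addPendant_adj_none_left]

lemma addPendant_adj_some_none : (G.addPendant b).Adj (some b) none :=
  addPendant_adj_none_right.2 rfl

-- Reducible, so that `G.addPendantHom b v` and `some v` agree as endpoints of walks.
abbrev addPendantHom (G : SimpleGraph V) (b : V) : G →g G.addPendant b :=
  ⟨some, addPendant_adj_some_some.2⟩

@[simp]
lemma addPendantHom_apply (v : V) : G.addPendantHom b v = some v := rfl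

lemma addPendantHom_injective : Function.Injective (G.addPendantHom b) :=
  Option.some_injective V

namespace Walk

lemma exists_map_addPendantHom_eq : ∀ {u v : V} (p : (G.addPendant b).Walk (some u) (some v)),
    none ∉ p.support → ∃ q : G.Walk u v, q.map (G.addPendantHom b) = p
  | _, _, .nil, _ => ⟨.nil, rfl⟩
  | _, _, .cons (v := none) _ p, hp => absurd (by simp) hp
  | _, _, .cons (v := some _) h p, hp => by
    obtain ⟨q, rfl⟩ := exists_map_addPendantHom_eq p (by simp_all)
    exact ⟨.cons (addPendant_adj_some_some.1 h) q, rfl⟩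

lemma edist_getD_le_length : ∀ {x y : Option V} (p : (G.addPendant b).Walk x y),
    G.edist (x.getD b) (y.getD b) ≤ p.length
  | _, _, .nil => by simp
  | x, y, .cons (v := z) h p => by
    have hstep : G.edist (x.getD b) (z.getD b) ≤ 1 := by
      rcases x with _ | x <;> rcases z with _ | z <;> simp_all [(edist_eq_one_iff_adj.2 _).le]
    calc G.edist (x.getD b) (y.getD b)
        ≤ G.edist (x.getD b) (z.getD b) + G.edist (z.getD b) (y.getD b) :=
          SimpleGraph.edist_triangle
      _ ≤ 1 + p.length := add_le_add hstep (edist_getD_le_length p)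
      _ = (p.cons h).length := by simp [add_comm]

lemma exists_eq_concat_addPendant {x : Option V} (hx : x ≠ none)
    (P : (G.addPendant b).Walk x none) :
    ∃ q : (G.addPendant b).Walk x (some b), P = q.concat addPendant_adj_some_none := by
  obtain ⟨y, hy, q, hq⟩ := P.reverse.exists_eq_cons_of_ne hx.symm
  obtain rfl := addPendant_adj_none_left.1 hy
  exact ⟨q.reverse, by rw [← P.reverse_reverse, hq, reverse_cons]; rfl⟩

end Walk

lemma Reachable.addPendant (hr : G.Reachable a b) : (G.addPendant b).Reachable (some a) none :=
  ⟨(hr.some.map (G.addPendantHom b)).concat addPendant_adj_some_none⟩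

lemma dist_addPendant (hr : G.Reachable a b) :
    (G.addPendant b).dist (some a) none = G.dist a b + 1 := by
  obtain ⟨p, hp⟩ := hr.exists_walk_length_eq_dist
  let P₀ : (G.addPendant b).Walk (some a) none :=
    (p.map (G.addPendantHom b)).concat addPendant_adj_some_none
  obtain ⟨P, hP⟩ := hr.addPendant.exists_walk_length_eq_dist
  refine le_antisymm ?_ ?_
  · calc (G.addPendant b).dist (some a) none ≤ P₀.length := dist_le P₀
      _ = G.dist a b + 1 := by simp [P₀, hp]
  · obtain ⟨q, rfl⟩ := P.exists_eq_concat_addPendant (Option.some_ne_none a)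
    have hq : G.dist a b ≤ q.length := by
      have := q.edist_getD_le_length
      exact_mod_cast hr.coe_dist_eq_edist ▸ this
    simpa [← hP] using hq

end SimpleGraph

lemma List.getElem?_append_eq_iff {α : Type*} {s t : List α} (u : List α)
    (hlen : s.length = t.length) (i : ℕ) : (s ++ u)[i]? = (t ++ u)[i]? ↔ s[i]? = t[i]? := by
  rcases lt_or_ge i s.length with h | h
  · rw [List.getElem?_append_left h, List.getElem?_append_left (hlen ▸ h)]
  · have h' : t.length ≤ i := hlen ▸ h
    simp [List.getElem?_append_right, h', hlen]

namespace Geodesic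

variable {G : SimpleGraph V} {a b : V}

def addPendant (hr : G.Reachable a b) (p : Geodesic G a b) :
    Geodesic (G.addPendant b) (some a) none :=
  ⟨(p.1.map (G.addPendantHom b)).concat addPendant_adj_some_none, by
    refine ⟨(p.2.1.map addPendantHom_injective).concat ?_ _, ?_⟩
    · simp [Walk.support_map]
    · simp [p.2.2, dist_addPendant hr]⟩

lemma support_addPendant (hr : G.Reachable a b) (p : Geodesic G a b) :
    (p.addPendant hr).1.support = p.1.support.map some ++ [none] := by
  simp [addPendant, Walk.support_map]

lemma addPendant_injective (hr : G.Reachable a b) : Function.Injective (addPendant hr) := by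
  intro p q h
  obtain ⟨_, hpq⟩ := Walk.concat_inj (congrArg Subtype.val h)
  exact Subtype.ext (Walk.map_injective_of_injective addPendantHom_injective _ _ hpq)

lemma addPendant_surjective (hr : G.Reachable a b) : Function.Surjective (addPendant hr) := by
  rintro ⟨P, hPpath, hPlen⟩
  obtain ⟨q, rfl⟩ := P.exists_eq_concat_addPendant (Option.some_ne_none a)
  obtain ⟨hqpath, hnone⟩ := (Walk.concat_isPath_iff _).1 hPpath
  obtain ⟨p, rfl⟩ := q.exists_map_addPendantHom_eq hnone
  have hplen : p.length = G.dist a b := by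
    simpa [dist_addPendant hr] using hPlen
  exact ⟨⟨p, hqpath.of_map, hplen⟩, rfl⟩

lemma diffIndices_addPendant (hr : G.Reachable a b) (p q : Geodesic G a b) :
    diffIndices (G.addPendant b) (some a) none (p.addPendant hr) (q.addPendant hr) =
      diffIndices G a b p q := by
  ext i
  simp only [diffIndices, Set.mem_ofPred_eq, support_addPendant, ne_eq]
  rw [List.getElem?_append_eq_iff _ (by simp [p.2.2, q.2.2]), List.getElem?_map,
    List.getElem?_map, (Option.map_injective (Option.some_injective V)).eq_iff]

end Geodesic

noncomputable def spgAddPendantIso {G : SimpleGraph V} {a b : V} (hr : G.Reachable a b) :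
    SPG G a b ≃g SPG (G.addPendant b) (some a) none where
  toEquiv := .ofBijective _
    ⟨Geodesic.addPendant_injective hr, Geodesic.addPendant_surjective hr⟩
  map_rel_iff' {p q} := by
    change (∃! i, i ∈ diffIndices _ _ _ (p.addPendant hr) (q.addPendant hr)) ↔ _
    rw [Geodesic.diffIndices_addPendant]
    rfl

theorem exists_spg_iso_dist_eq_add {V : Type u} (G : SimpleGraph V) (a b : V)
    (hr : G.Reachable a b) (k : ℕ) :
    ∃ (W : Type u) (G' : SimpleGraph W) (a' b' : W),
      G'.Reachable a' b' ∧ G'.dist a' b' = G.dist a b + k ∧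
      Nonempty (SPG G' a' b' ≃g SPG G a b) := by
  induction k with
  | zero => exact ⟨V, G, a, b, hr, rfl, ⟨.refl⟩⟩
  | succ k ih =>
    obtain ⟨W, G', a', b', hr', hdist, ⟨e⟩⟩ := ih
    refine ⟨Option W, G'.addPendant b', some a', none, hr'.addPendant, ?_,
      ⟨(spgAddPendantIso hr').symm.trans e⟩⟩
    rw [dist_addPendant hr', hdist, add_assoc]

theorem stmt_10_general {V : Type u} (G : SimpleGraph V) (a b : V)
    (hr : G.Reachable a b) (n n' : ℕ) (hn : G.dist a b = n) (hle : n ≤ n') :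
    ∃ (W : Type u) (G' : SimpleGraph W) (a' b' : W),
      G'.Reachable a' b' ∧ G'.dist a' b' = n' ∧
      Nonempty (SPG G' a' b' ≃g SPG G a b) := by
  obtain ⟨W, G', a', b', hr', hdist, e⟩ := exists_spg_iso_dist_eq_add G a b hr (n' - n)
  exact ⟨W, G', a', b', hr', by omega, e⟩

/-- the distance between the base vertices can be made arbitrarily larger. -/
theorem stmt_10 {V : Type u} (G : SimpleGraph V) (a b : V) (hab : a ≠ b)
    (hr : G.Reachable a b) (n n' : ℕ) (hn : G.dist a b = n) (hle : n ≤ n') :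
    ∃ (W : Type u) (G' : SimpleGraph W) (a' b' : W),
      G'.Reachable a' b' ∧ G'.dist a' b' = n' ∧
      Nonempty (SPG G' a' b' ≃g SPG G a b) :=
  stmt_10_general G a b hr n n' hn hle
end

section
/- The claw K_{1,3} is not a shortest path graph: there is no graph G with distinct vertices a,b such that S(G,a,b) is isomorphic to K_{1,3}. -/
open SimpleGraph

variable {V : Type*}

/-! Let `C` be the centre of the claw and `U₁, U₂, U₃` its leaves. Each `Uₖ` differs from `C`
at exactly one level `iₖ`, and these levels are distinct: two leaves differing from `C` only at
the same level would be equal or adjacent. So there are leaves `P`, `Q` with levels `i + 2 ≤ j`.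
Both pass through the vertex of `C` at level `i + 1`, so following `P` up to that level and `Q`
afterwards is again a geodesic. It differs from `P` only at level `j`, hence is adjacent to the
leaf `P`, yet it differs from `C` at level `i`; but the only neighbour of a leaf is `C`. -/

namespace Geodesic

variable {G : SimpleGraph V} {a b : V}

lemma getVert_of_dist_le (P : Geodesic G a b) {i : ℕ} (hi : G.dist a b ≤ i) :
    P.1.getVert i = b :=
  P.1.getVert_of_length_le (P.2.2.trans_le hi)

lemma ext_getVert {P Q : Geodesic G a b} (h : ∀ i, P.1.getVert i = Q.1.getVert i) : P = Q :=
  Subtype.ext (Walk.ext_getVert h)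

lemma getElem?_support_eq_iff (P Q : Geodesic G a b) (i : ℕ) :
    P.1.support[i]? = Q.1.support[i]? ↔ P.1.getVert i = Q.1.getVert i := by
  rcases le_or_gt i (G.dist a b) with hi | hi
  · rw [← P.1.getVert_eq_support_getElem? (hi.trans_eq P.2.2.symm),
      ← Q.1.getVert_eq_support_getElem? (hi.trans_eq Q.2.2.symm), Option.some_inj]
  · rw [P.getVert_of_dist_le hi.le, Q.getVert_of_dist_le hi.le, List.getElem?_eq_none,
      List.getElem?_eq_none] <;> simp [P.2.2, Q.2.2, hi]

lemma lt_dist_of_getVert_ne {P Q : Geodesic G a b} {i : ℕ}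
    (h : P.1.getVert i ≠ Q.1.getVert i) : i < G.dist a b := by
  by_contra! hi
  exact h (by rw [P.getVert_of_dist_le hi, Q.getVert_of_dist_le hi])

lemma exists_splice (P Q : Geodesic G a b) {n : ℕ} (hn : n ≤ G.dist a b)
    (h : P.1.getVert n = Q.1.getVert n) :
    ∃ X : Geodesic G a b,
      ∀ m, X.1.getVert m = if m ≤ n then P.1.getVert m else Q.1.getVert m := by
  set X : G.Walk a b := (P.1.take n).append ((Q.1.drop n).copy h.symm rfl)
  have hX : X.length = G.dist a b := by
    simp only [X, Walk.length_append, Walk.take_length, Walk.length_copy, Walk.drop_length,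
      P.2.2, Q.2.2]
    omega
  refine ⟨⟨X, X.isPath_of_length_eq_dist hX, hX⟩, fun m => ?_⟩
  simp only [X, Walk.getVert_append', Walk.take_length, Walk.take_getVert, Walk.getVert_copy,
    Walk.drop_getVert, P.2.2, min_eq_left hn]
  split_ifs with hm <;> congr 1 <;> omega

def DiffersExactlyAt (P Q : Geodesic G a b) (i : ℕ) : Prop :=
  ∀ m, P.1.getVert m ≠ Q.1.getVert m ↔ m = i

variable {P Q : Geodesic G a b} {i : ℕ}

lemma DiffersExactlyAt.getVert_ne (h : P.DiffersExactlyAt Q i) : P.1.getVert i ≠ Q.1.getVert i :=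
  (h i).2 rfl

lemma DiffersExactlyAt.getVert_eq (h : P.DiffersExactlyAt Q i) {m : ℕ} (hm : m ≠ i) :
    P.1.getVert m = Q.1.getVert m :=
  not_not.1 (mt (h m).1 hm)

end Geodesic

open Geodesic

namespace SPG

variable {G : SimpleGraph V} {a b : V}

lemma adj_iff_exists_differsExactlyAt {P Q : Geodesic G a b} :
    (SPG G a b).Adj P Q ↔ ∃ i, P.DiffersExactlyAt Q i := by
  change (∃! i, P.1.support[i]? ≠ Q.1.support[i]?) ↔ _
  simp only [ne_eq, getElem?_support_eq_iff, DiffersExactlyAt]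
  exact ⟨fun ⟨i, hi, hu⟩ => ⟨i, fun m => ⟨hu m, fun hm => hm ▸ hi⟩⟩,
    fun ⟨i, hi⟩ => ⟨i, (hi i).2 rfl, fun m => (hi m).1⟩⟩

lemma eq_of_differsExactlyAt_of_not_adj {C P Q : Geodesic G a b} {i : ℕ}
    (hP : P.DiffersExactlyAt C i) (hQ : Q.DiffersExactlyAt C i) (hPQ : ¬ (SPG G a b).Adj P Q) :
    P = Q := by
  have agree : ∀ m, m ≠ i → P.1.getVert m = Q.1.getVert m := fun m hm =>
    (hP.getVert_eq hm).trans (hQ.getVert_eq hm).symm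
  by_cases hi : P.1.getVert i = Q.1.getVert i
  · exact ext_getVert fun m => if hm : m = i then hm ▸ hi else agree m hm
  · refine absurd (adj_iff_exists_differsExactlyAt.2 ⟨i, fun m => ⟨fun h => ?_, (· ▸ hi)⟩⟩) hPQ
    by_contra hm
    exact h (agree m hm)

lemma exists_adj_ne_of_add_two_le {C P Q : Geodesic G a b} {i j : ℕ}
    (hP : P.DiffersExactlyAt C i) (hQ : Q.DiffersExactlyAt C j) (hij : i + 2 ≤ j) :
    ∃ X, (SPG G a b).Adj X P ∧ X ≠ C := by
  have hj : j < G.dist a b := lt_dist_of_getVert_ne hQ.getVert_ne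
  obtain ⟨X, hX⟩ := exists_splice P Q (n := i + 1) (by omega)
    ((hP.getVert_eq (by omega)).trans (hQ.getVert_eq (by omega)).symm)
  refine ⟨X, adj_iff_exists_differsExactlyAt.2 ⟨j, fun m => ?_⟩,
    fun hXC => hP.getVert_ne ?_⟩
  · rw [hX]
    split_ifs with hm
    · simp only [ne_eq, not_true_eq_false, false_iff]
      omega
    · rw [hP.getVert_eq (by omega)]
      exact hQ m
  · rw [← hXC, hX, if_pos (by omega)]

end SPG

lemma exists_add_two_le_of_injective_fin_three {f : Fin 3 → ℕ} (hf : Function.Injective f) :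
    ∃ k l, f k + 2 ≤ f l := by
  by_contra! h
  have := hf.ne (show (0 : Fin 3) ≠ 1 by decide)
  have := hf.ne (show (0 : Fin 3) ≠ 2 by decide)
  have := hf.ne (show (1 : Fin 3) ≠ 2 by decide)
  have := h 0 1; have := h 1 0; have := h 0 2; have := h 2 0; have := h 1 2; have := h 2 1
  omega

theorem SPG.exists_adj_ne_of_pairwise_not_adj {G : SimpleGraph V} {a b : V}
    (C : Geodesic G a b) (U : Fin 3 → Geodesic G a b) (hU : Function.Injective U)
    (hUC : ∀ k, (SPG G a b).Adj (U k) C) (hUU : ∀ k l, ¬ (SPG G a b).Adj (U k) (U l)) :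
    ∃ k X, (SPG G a b).Adj X (U k) ∧ X ≠ C := by
  choose i hi using fun k => adj_iff_exists_differsExactlyAt.1 (hUC k)
  have hi_inj : Function.Injective i := fun k l hkl =>
    hU (eq_of_differsExactlyAt_of_not_adj (hi k) (hkl ▸ hi l) (hUU k l))
  obtain ⟨k, l, hkl⟩ := exists_add_two_le_of_injective_fin_three hi_inj
  exact ⟨k, exists_adj_ne_of_add_two_le (hi k) (hi l) hkl⟩

lemma completeBipartiteGraph_fin_one_eq_inl_of_adj_inr {β : Type*} {x : Fin 1 ⊕ β} {k : β}
    (h : (completeBipartiteGraph (Fin 1) β).Adj x (.inr k)) : x = .inl 0 := by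
  rcases x with y | y
  · rw [Subsingleton.elim y 0]
  · simp at h

/-- the claw `K_{1,3}` is not a shortest path graph. -/
theorem stmt_12 :
    ¬ ∃ (V : Type u) (G : SimpleGraph V) (a b : V), a ≠ b ∧
      Nonempty (SPG G a b ≃g completeBipartiteGraph (Fin 1) (Fin 3)) := by
  rintro ⟨V, G, a, b, -, ⟨e⟩⟩
  obtain ⟨k, X, hXU, hXC⟩ := SPG.exists_adj_ne_of_pairwise_not_adj (e.symm (.inl 0))
    (fun k => e.symm (.inr k)) (e.symm.injective.comp Sum.inr_injective)
    (fun k => e.symm.map_adj_iff.2 (by simp)) (fun k l h => by simpa using e.symm.map_adj_iff.1 h)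
  refine hXC (e.eq_symm_apply.2 (completeBipartiteGraph_fin_one_eq_inl_of_adj_inr (k := k) ?_))
  simpa using e.map_adj_iff.2 hXU
end

section
/- For every n ≥ 1, the complete graph Kₙ is a shortest path graph. Moreover, it has a base graph in which every (a,b)-geodesic passes through some vertex through which no other (a,b)-geodesic passes (every vertex of the shortest path graph has the unique vertex-path property). Concretely, the graph G with V(G) = {a, v₁,…,vₙ, w, b} and E(G) = {a vᵢ, vᵢ w : i = 1,…,n} ∪ {w b} satisfies S(G,a,b) ≅ Kₙ. -/
open SimpleGraph

variable {V : Type*}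

/-- `U` has the unique vertex-path property: `U` is the unique `(a,b)`-geodesic
in `G` passing through some vertex `v`. -/
def UVP (G : SimpleGraph V) (a b : V) (U : Geodesic G a b) : Prop :=
  ∃ v : V, v ∈ U.1.support ∧ ∀ W : Geodesic G a b, v ∈ W.1.support → W = U

/-! Every walk from `a` starts with an edge `a vᵢ`, and the only neighbour of `b` is `w`, so a case
split on walks of length at most three shows that the `(a,b)`-geodesics are exactly the paths
`a vᵢ w b`, of length 3. Two distinct such paths differ only at index 1, which makes `S(G,a,b)`
complete, and `vᵢ` lies on a single one of them. -/

open Sum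

namespace SPGComplete

variable {ι : Type*}

-- `inr 0`, `inr 1`, `inr 2` are `a`, `w`, `b`, and `inl i` is `vᵢ`.
def baseGraph (ι : Type*) : SimpleGraph (ι ⊕ Fin 3) :=
  SimpleGraph.fromRel fun x y =>
    (x = inr 0 ∧ ∃ i, y = inl i) ∨ ((∃ i, x = inl i) ∧ y = inr 1) ∨ (x = inr 1 ∧ y = inr 2)

lemma adj_inr_zero_iff {x : ι ⊕ Fin 3} : (baseGraph ι).Adj (inr 0) x ↔ ∃ i, x = inl i := by
  rcases x with i | k
  · simp [baseGraph]
  · fin_cases k <;> simp [baseGraph]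

lemma adj_inl_iff {i : ι} {x : ι ⊕ Fin 3} :
    (baseGraph ι).Adj (inl i) x ↔ x = inr 0 ∨ x = inr 1 := by
  rcases x with j | k
  · simp [baseGraph]
  · fin_cases k <;> simp [baseGraph]

lemma adj_inr_two_iff {x : ι ⊕ Fin 3} : (baseGraph ι).Adj x (inr 2) ↔ x = inr 1 := by
  rcases x with j | k
  · simp [baseGraph]
  · fin_cases k <;> simp [baseGraph]

lemma adj_inr_zero_inl (i : ι) : (baseGraph ι).Adj (inr 0) (inl i) :=
  adj_inr_zero_iff.2 ⟨i, rfl⟩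

lemma adj_inl_inr_one (i : ι) : (baseGraph ι).Adj (inl i) (inr 1) :=
  adj_inl_iff.2 (Or.inr rfl)

lemma adj_inr_one_inr_two : (baseGraph ι).Adj (inr 1) (inr 2) :=
  adj_inr_two_iff.2 rfl

def walkThrough (i : ι) : (baseGraph ι).Walk (inr 0) (inr 2) :=
  .cons (adj_inr_zero_inl i) (.cons (adj_inl_inr_one i) (.cons adj_inr_one_inr_two .nil))

@[simp] lemma support_walkThrough (i : ι) :
    (walkThrough i).support = [inr 0, inl i, inr 1, inr 2] := rfl

@[simp] lemma length_walkThrough (i : ι) : (walkThrough i).length = 3 := rfl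

lemma isPath_walkThrough (i : ι) : (walkThrough i).IsPath := by
  simp [SimpleGraph.Walk.isPath_def]

lemma eq_walkThrough_of_length_le_three (p : (baseGraph ι).Walk (inr 0) (inr 2))
    (hp : p.length ≤ 3) : ∃ i, p = walkThrough i := by
  match p with
  | .cons h₁ .nil => exact absurd (adj_inr_zero_iff.1 h₁) (by simp)
  | .cons h₁ (.cons h₂ .nil) =>
    obtain ⟨i, rfl⟩ := adj_inr_zero_iff.1 h₁
    exact absurd (adj_inl_iff.1 h₂) (by simp)
  | .cons h₁ (.cons h₂ (.cons h₃ .nil)) =>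
    obtain ⟨i, rfl⟩ := adj_inr_zero_iff.1 h₁
    obtain rfl := adj_inr_two_iff.1 h₃
    exact ⟨i, rfl⟩
  | .cons _ (.cons _ (.cons _ (.cons _ _))) =>
    simp only [SimpleGraph.Walk.length_cons] at hp
    omega

lemma three_le_length (p : (baseGraph ι).Walk (inr 0) (inr 2)) : 3 ≤ p.length := by
  by_contra! hp
  obtain ⟨i, rfl⟩ := eq_walkThrough_of_length_le_three p hp.le
  simp at hp

lemma nonempty_of_walk (p : (baseGraph ι).Walk (inr 0) (inr 2)) : Nonempty ι := by
  cases p with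
  | cons h _ =>
    obtain ⟨i, -⟩ := adj_inr_zero_iff.1 h
    exact ⟨i⟩

lemma dist_eq_three [Nonempty ι] : (baseGraph ι).dist (inr 0) (inr 2) = 3 := by
  obtain ⟨i⟩ := ‹Nonempty ι›
  obtain ⟨p, hp⟩ := (walkThrough i).reachable.exists_walk_length_eq_dist
  exact le_antisymm (SimpleGraph.dist_le (walkThrough i)) (hp ▸ three_le_length p)

def geodesic (i : ι) : Geodesic (baseGraph ι) (inr 0) (inr 2) :=
  have : Nonempty ι := ⟨i⟩
  ⟨walkThrough i, isPath_walkThrough i, dist_eq_three.symm⟩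

lemma geodesic_injective : Function.Injective (geodesic (ι := ι)) := by
  intro i j h
  simpa [geodesic] using congrArg (fun U => U.1.support) h

lemma geodesic_surjective : Function.Surjective (geodesic (ι := ι)) := by
  rintro ⟨p, -, hp⟩
  have := nonempty_of_walk p
  obtain ⟨i, rfl⟩ := eq_walkThrough_of_length_le_three p (hp.trans dist_eq_three).le
  exact ⟨i, rfl⟩

lemma diffIndices_geodesic {i j : ι} (hij : i ≠ j) :
    diffIndices _ _ _ (geodesic i) (geodesic j) = {1} := by
  ext k
  rcases k with _ | _ | _ | _ | k <;> simp [diffIndices, geodesic, hij]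

lemma spg_adj_geodesic_iff {i j : ι} :
    (SPG _ _ _).Adj (geodesic i) (geodesic j) ↔ i ≠ j := by
  refine ⟨fun h hij => (SPG _ _ _).loopless.irrefl _ (hij ▸ h), fun hij => ?_⟩
  show ∃! k, k ∈ diffIndices _ _ _ (geodesic i) (geodesic j)
  rw [diffIndices_geodesic hij]
  exact ⟨1, rfl, fun _ => id⟩

noncomputable def spgIsoCompleteGraph : SPG (baseGraph ι) (inr 0) (inr 2) ≃g completeGraph ι :=
  RelIso.symm
    { toEquiv := .ofBijective geodesic ⟨geodesic_injective, geodesic_surjective⟩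
      map_rel_iff' := spg_adj_geodesic_iff }

lemma uvp_geodesic (i : ι) : UVP _ _ _ (geodesic i) := by
  refine ⟨inl i, by simp [geodesic], fun W hW => ?_⟩
  obtain ⟨j, rfl⟩ := geodesic_surjective W
  obtain rfl : j = i := by simpa [geodesic, eq_comm] using hW
  rfl

lemma uvp (U : Geodesic (baseGraph ι) (inr 0) (inr 2)) : UVP _ _ _ U := by
  obtain ⟨i, rfl⟩ := geodesic_surjective U
  exact uvp_geodesic i

end SPGComplete

theorem stmt_13_general (n : ℕ) :
    let Vtx := Fin n ⊕ Fin 3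
    let a : Vtx := Sum.inr 0
    let w : Vtx := Sum.inr 1
    let b : Vtx := Sum.inr 2
    let G : SimpleGraph Vtx := SimpleGraph.fromRel fun x y =>
      (x = a ∧ ∃ i, y = Sum.inl i) ∨ ((∃ i, x = Sum.inl i) ∧ y = w) ∨ (x = w ∧ y = b)
    Nonempty (SPG G a b ≃g completeGraph (Fin n)) ∧
      ∀ U : Geodesic G a b, UVP G a b U :=
  ⟨⟨SPGComplete.spgIsoCompleteGraph⟩, SPGComplete.uvp⟩

/-- `Kₙ` is a shortest path graph via the concrete base graph
`V(G) = {a, v₁, …, vₙ, w, b}`, `E(G) = {a vᵢ, vᵢ w : i} ∪ {w b}`; moreover every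
vertex of the shortest path graph has the unique vertex-path property. -/
theorem stmt_13 (n : ℕ) (hn : 1 ≤ n) :
    let Vtx := Fin n ⊕ Fin 3
    let a : Vtx := Sum.inr 0
    let w : Vtx := Sum.inr 1
    let b : Vtx := Sum.inr 2
    let G : SimpleGraph Vtx := SimpleGraph.fromRel fun x y =>
      (x = a ∧ ∃ i, y = Sum.inl i) ∨ ((∃ i, x = Sum.inl i) ∧ y = w) ∨ (x = w ∧ y = b)
    Nonempty (SPG G a b ≃g completeGraph (Fin n)) ∧
      ∀ U : Geodesic G a b, UVP G a b U :=
  stmt_13_general n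
end

section
/- Let H = S(G,a,b) be a shortest path graph in which (a,b)-geodesics have exactly two index levels, and let U and W be two vertex-disjoint maximal cliques in H whose difference indices are 1 and 2 respectively. Then the graph H' obtained from H by adding one new vertex X adjacent to every vertex of U and every vertex of W is a shortest path graph; moreover every vertex of H with the unique vertex-path property retains it in H'. -/
/-!
Since `dist a b = 3`, an `(a,b)`-geodesic is determined by its two middle vertices `(x, y)`,
and two geodesics are adjacent in `SPG G a b` iff they share exactly one of them. A maximal
clique with difference index 1 is therefore the set of all geodesics with a fixed second middle
vertex `w`, and one with difference index 2 the set of all geodesics with a fixed first middle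
vertex `u`; disjointness of the two cliques says that `u` and `w` are not adjacent.

Adding the edge `uw` to `G` keeps `dist a b = 3` and creates exactly one new geodesic `a u w b`,
which is adjacent precisely to the geodesics through `u` or through `w`. A vertex witnessing the
unique vertex-path property of an old geodesic `X` still works unless it is `u` or `w`. If it is
`u`, then `X` is the only geodesic through `u`, and any other geodesic through the second middle
vertex of `X` would be adjacent to `X`, hence lie in the maximal clique through `u`; so that
vertex is a witness avoiding the new geodesic (symmetrically for `w`).
-/

open SimpleGraph

variable {V : Type*}

namespace SimpleGraph

variable {α : Type*} {H : SimpleGraph α} {K : Set α}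

lemma maximal_isClique_of_forall (hK : H.IsClique K)
    (hmax : ∀ K', H.IsClique K' → K ⊆ K' → K' = K) : Maximal H.IsClique K :=
  isMaximalClique_iff.mpr ⟨hK, fun K' hK' hKK' => (hmax K' hK' hKK').le⟩

lemma mem_of_forall_adj_of_maximal (hK : Maximal H.IsClique K) {x : α}
    (hx : ∀ y ∈ K, x ≠ y → H.Adj x y) : x ∈ K :=
  hK.mem_of_prop_insert (hK.prop.insert hx)

lemma nonempty_of_maximal [Nonempty α] (hK : Maximal H.IsClique K) : K.Nonempty := by
  obtain ⟨x⟩ := ‹Nonempty α›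
  rw [Set.nonempty_iff_ne_empty]
  rintro rfl
  exact Set.singleton_ne_empty x
    (hK.eq_of_subset (isClique_singleton x) (Set.empty_subset _)).symm

lemma eq_setOf_of_maximal {β : Type*} (hK : Maximal H.IsClique K) {f : α → β} {c : β}
    (hf : ∀ x y, f x = f y → x ≠ y → H.Adj x y) (hKc : ∀ x ∈ K, f x = c) :
    K = {x | f x = c} :=
  Set.Subset.antisymm hKc fun x hx => mem_of_forall_adj_of_maximal hK fun y hy =>
    hf x y (hx.trans (hKc y hy).symm)

lemma not_adj_of_one_lt_dist {G : SimpleGraph α} {a b : α} (h : 1 < G.dist a b) : ¬G.Adj a b :=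
  fun hab => h.ne' (dist_eq_one_iff_adj.mpr hab)

lemma not_adj_of_adj_of_two_lt_dist {G : SimpleGraph α} {a b z : α} (h : 2 < G.dist a b)
    (haz : G.Adj a z) : ¬G.Adj z b := fun hzb =>
  (G.dist_le (.cons haz (.cons hzb .nil))).not_gt h

lemma sup_edge_adj_iff_of_ne {G : SimpleGraph α} {u w x y : α} (hxu : x ≠ u) (hxw : x ≠ w) :
    (G ⊔ edge u w).Adj x y ↔ G.Adj x y := by
  simp [edge_adj, hxu, hxw]

section SupEdge

variable {G : SimpleGraph α} {a b u w : α}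

lemma sup_edge_adj_start_iff (hdist : G.dist a b = 3) (hu : G.Adj a u) (hw : G.Adj w b) {x : α} :
    (G ⊔ edge u w).Adj a x ↔ G.Adj a x :=
  sup_edge_adj_iff_of_ne hu.ne fun h => not_adj_of_one_lt_dist (by omega) (h ▸ hw)

lemma sup_edge_adj_end_iff (hdist : G.dist a b = 3) (hu : G.Adj a u) (hw : G.Adj w b) {x : α} :
    (G ⊔ edge u w).Adj x b ↔ G.Adj x b := by
  rw [adj_comm, G.adj_comm]
  exact sup_edge_adj_iff_of_ne (fun h => not_adj_of_one_lt_dist (by omega) (h ▸ hu)) hw.ne'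

lemma dist_sup_edge (hdist : G.dist a b = 3) (hu : G.Adj a u) (hw : G.Adj w b) :
    (G ⊔ edge u w).dist a b = G.dist a b := by
  have hr : G.Reachable a b := Reachable.of_dist_ne_zero (by omega)
  refine le_antisymm (hr.dist_anti le_sup_left) ?_
  obtain ⟨P, hP⟩ := (hr.mono le_sup_left).exists_walk_length_eq_dist
  rw [← hP, hdist]
  rcases P with _ | ⟨h₁, _ | ⟨h₂, _ | ⟨_, _⟩⟩⟩
  · simp at hdist
  · exact absurd ((sup_edge_adj_start_iff hdist hu hw).mp h₁) (not_adj_of_one_lt_dist (by omega))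
  · exact absurd ((sup_edge_adj_end_iff hdist hu hw).mp h₂)
      (not_adj_of_adj_of_two_lt_dist (by omega) ((sup_edge_adj_start_iff hdist hu hw).mp h₁))
  · simp

end SupEdge

def adjoinVertex (H : SimpleGraph α) (N : Set α) : SimpleGraph (α ⊕ Unit) :=
  fromRel fun x y =>
    (∃ p q, x = .inl p ∧ y = .inl q ∧ H.Adj p q) ∨ (∃ p, x = .inl p ∧ p ∈ N ∧ y = .inr ())

variable {N : Set α}

@[simp] lemma adjoinVertex_adj_inl_inl {p q : α} :
    (H.adjoinVertex N).Adj (.inl p) (.inl q) ↔ H.Adj p q := by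
  simp [adjoinVertex, H.adj_comm q p]
  exact fun h => h.ne

@[simp] lemma adjoinVertex_adj_inl_inr {p : α} :
    (H.adjoinVertex N).Adj (.inl p) (.inr ()) ↔ p ∈ N := by
  simp [adjoinVertex]

@[simp] lemma adjoinVertex_adj_inr_inl {p : α} :
    (H.adjoinVertex N).Adj (.inr ()) (.inl p) ↔ p ∈ N := by
  simp [adjoinVertex]

@[simp] lemma not_adjoinVertex_adj_inr_inr : ¬(H.adjoinVertex N).Adj (.inr ()) (.inr ()) :=
  (H.adjoinVertex N).loopless.irrefl _

def adjoinVertexIso {β : Type*} {K : SimpleGraph β} (e : α ⊕ Unit ≃ β)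
    (hinl : ∀ p q, K.Adj (e (.inl p)) (e (.inl q)) ↔ H.Adj p q)
    (hinr : ∀ p, K.Adj (e (.inl p)) (e (.inr ())) ↔ p ∈ N) : K ≃g H.adjoinVertex N where
  toEquiv := e.symm
  map_rel_iff' {x y} := by
    obtain ⟨s, rfl⟩ := e.surjective x
    obtain ⟨t, rfl⟩ := e.surjective y
    rcases s with p | ⟨⟨⟩⟩ <;> rcases t with q | ⟨⟨⟩⟩
    · simp [hinl]
    · simp [hinr]
    · simp [K.adj_comm, hinr]
    · simp

end SimpleGraph

namespace Geodesic

variable {G G' : SimpleGraph V} {a b : V}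

lemma nonempty_of_reachable (h : G.Reachable a b) : Nonempty (Geodesic G a b) :=
  let ⟨p, hp, hlen⟩ := h.exists_path_of_dist
  ⟨⟨p, hp, hlen⟩⟩

lemma ext_support {p q : Geodesic G a b} (h : p.1.support = q.1.support) : p = q :=
  Subtype.ext (Walk.ext_support h)

def mid₁ (p : Geodesic G a b) : V := p.1.getVert 1

def mid₂ (p : Geodesic G a b) : V := p.1.getVert 2

lemma mid₁_mem_support (p : Geodesic G a b) : p.mid₁ ∈ p.1.support :=
  Walk.getVert_mem_support _ _

lemma mid₂_mem_support (p : Geodesic G a b) : p.mid₂ ∈ p.1.support :=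
  Walk.getVert_mem_support _ _

section MapLe

variable (hle : G ≤ G') (hd : G'.dist a b = G.dist a b)

def mapLe (p : Geodesic G a b) : Geodesic G' a b :=
  ⟨p.1.mapLe hle, p.2.1.mapLe hle, by rw [Walk.length_mapLe, p.2.2, hd]⟩

@[simp] lemma support_mapLe (p : Geodesic G a b) : (p.mapLe hle hd).1.support = p.1.support :=
  Walk.support_mapLe_eq_support _ _

@[simp] lemma mid₁_mapLe (p : Geodesic G a b) : (p.mapLe hle hd).mid₁ = p.mid₁ :=
  Walk.getVert_map _ _ _

@[simp] lemma mid₂_mapLe (p : Geodesic G a b) : (p.mapLe hle hd).mid₂ = p.mid₂ :=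
  Walk.getVert_map _ _ _

lemma mapLe_injective : Function.Injective (mapLe hle hd) := fun p q h =>
  ext_support (by simpa using congrArg (·.1.support) h)

lemma spg_adj_mapLe_iff {p q : Geodesic G a b} :
    (SPG G' a b).Adj (p.mapLe hle hd) (q.mapLe hle hd) ↔ (SPG G a b).Adj p q := by
  simp [SPG, diffIndices]

lemma uvp_mapLe_of_not_mem_support {Y : Geodesic G' a b}
    (hcover : ∀ P : Geodesic G' a b, P = Y ∨ ∃ p, P = mapLe hle hd p)
    {X : Geodesic G a b} {v : V} (hvX : v ∈ X.1.support) (hvY : v ∉ Y.1.support)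
    (huniq : ∀ p : Geodesic G a b, v ∈ p.1.support → p = X) : UVP G' a b (X.mapLe hle hd) := by
  refine ⟨v, by simpa using hvX, fun P hP => ?_⟩
  obtain rfl | ⟨p, rfl⟩ := hcover P
  · exact absurd hP hvY
  · rw [huniq p (by simpa using hP)]

end MapLe

lemma exists_eq_cons (hdist : G.dist a b = 3) (p : Geodesic G a b) :
    ∃ (h₁ : G.Adj a p.mid₁) (h₂ : G.Adj p.mid₁ p.mid₂) (h₃ : G.Adj p.mid₂ b),
      p.1 = .cons h₁ (.cons h₂ (.cons h₃ .nil)) := by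
  obtain ⟨P, -, hlen⟩ := p
  rw [hdist] at hlen
  rcases P with _ | ⟨h₁, _ | ⟨h₂, _ | ⟨h₃, _ | ⟨_, _⟩⟩⟩⟩ <;> simp at hlen
  exact ⟨h₁, h₂, h₃, rfl⟩

lemma support_eq (hdist : G.dist a b = 3) (p : Geodesic G a b) :
    p.1.support = [a, p.mid₁, p.mid₂, b] := by
  obtain ⟨_, _, _, h⟩ := exists_eq_cons hdist p
  rw [h]
  rfl

lemma adj_mid₁ (hdist : G.dist a b = 3) (p : Geodesic G a b) : G.Adj a p.mid₁ :=
  (exists_eq_cons hdist p).1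

lemma adj_mid₁_mid₂ (hdist : G.dist a b = 3) (p : Geodesic G a b) : G.Adj p.mid₁ p.mid₂ :=
  (exists_eq_cons hdist p).2.1

lemma adj_mid₂ (hdist : G.dist a b = 3) (p : Geodesic G a b) : G.Adj p.mid₂ b :=
  (exists_eq_cons hdist p).2.2.1

lemma ext_mid (hdist : G.dist a b = 3) {p q : Geodesic G a b} (h₁ : p.mid₁ = q.mid₁)
    (h₂ : p.mid₂ = q.mid₂) : p = q :=
  ext_support (by rw [support_eq hdist, support_eq hdist, h₁, h₂])

lemma mem_support_iff (hdist : G.dist a b = 3) {p : Geodesic G a b} {v : V} :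
    v ∈ p.1.support ↔ v = a ∨ v = p.mid₁ ∨ v = p.mid₂ ∨ v = b := by
  simp [support_eq hdist]

def ofAdj (hdist : G.dist a b = 3) {x y : V} (h₁ : G.Adj a x) (h₂ : G.Adj x y)
    (h₃ : G.Adj y b) : Geodesic G a b :=
  ⟨.cons h₁ (.cons h₂ (.cons h₃ .nil)), Walk.isPath_of_length_eq_dist _ (by simp [hdist]),
    by simp [hdist]⟩

@[simp] lemma mid₁_ofAdj (hdist : G.dist a b = 3) {x y : V} (h₁ : G.Adj a x) (h₂ : G.Adj x y)
    (h₃ : G.Adj y b) : (ofAdj hdist h₁ h₂ h₃).mid₁ = x := rfl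

@[simp] lemma mid₂_ofAdj (hdist : G.dist a b = 3) {x y : V} (h₁ : G.Adj a x) (h₂ : G.Adj x y)
    (h₃ : G.Adj y b) : (ofAdj hdist h₁ h₂ h₃).mid₂ = y := rfl

lemma diffIndices_eq (hdist : G.dist a b = 3) (p q : Geodesic G a b) :
    diffIndices G a b p q = {i | i = 1 ∧ p.mid₁ ≠ q.mid₁ ∨ i = 2 ∧ p.mid₂ ≠ q.mid₂} := by
  ext (_ | _ | _ | _ | i) <;> simp [diffIndices, support_eq hdist]

lemma spg_adj_iff (hdist : G.dist a b = 3) {p q : Geodesic G a b} :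
    (SPG G a b).Adj p q ↔
      p.mid₁ ≠ q.mid₁ ∧ p.mid₂ = q.mid₂ ∨ p.mid₁ = q.mid₁ ∧ p.mid₂ ≠ q.mid₂ := by
  show (∃! i, i ∈ diffIndices G a b p q) ↔ _
  rw [diffIndices_eq hdist]
  by_cases h₁ : p.mid₁ = q.mid₁ <;> by_cases h₂ : p.mid₂ = q.mid₂ <;> simp [h₁, h₂]
  rintro ⟨i, -, hi⟩
  have := hi 1 (.inl rfl)
  have := hi 2 (.inr rfl)
  omega

lemma spg_adj_of_mid₁_eq (hdist : G.dist a b = 3) {p q : Geodesic G a b} (h : p.mid₁ = q.mid₁)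
    (hne : p ≠ q) : (SPG G a b).Adj p q :=
  (spg_adj_iff hdist).mpr (.inr ⟨h, fun h₂ => hne (ext_mid hdist h h₂)⟩)

lemma spg_adj_of_mid₂_eq (hdist : G.dist a b = 3) {p q : Geodesic G a b} (h : p.mid₂ = q.mid₂)
    (hne : p ≠ q) : (SPG G a b).Adj p q :=
  (spg_adj_iff hdist).mpr (.inl ⟨fun h₁ => hne (ext_mid hdist h₁ h), h⟩)

lemma mid₁_eq_of_diffIndices_eq_two (hdist : G.dist a b = 3) {p q : Geodesic G a b}
    (h : diffIndices G a b p q = {2}) : p.mid₁ = q.mid₁ := by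
  by_contra hne
  have h1 : 1 ∈ diffIndices G a b p q := by
    rw [diffIndices_eq hdist]
    exact .inl ⟨rfl, hne⟩
  simp [h] at h1

lemma mid₂_eq_of_diffIndices_eq_one (hdist : G.dist a b = 3) {p q : Geodesic G a b}
    (h : diffIndices G a b p q = {1}) : p.mid₂ = q.mid₂ := by
  by_contra hne
  have h2 : 2 ∈ diffIndices G a b p q := by
    rw [diffIndices_eq hdist]
    exact .inr ⟨rfl, hne⟩
  simp [h] at h2

lemma mid₁_eq_of_mid₁_mem_support (hdist : G.dist a b = 3) {p q : Geodesic G a b}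
    (h : p.mid₁ ∈ q.1.support) : q.mid₁ = p.mid₁ := by
  rcases (mem_support_iff hdist).mp h with h | h | h | h
  · exact absurd h (adj_mid₁ hdist p).ne'
  · exact h.symm
  · exact absurd (h ▸ adj_mid₂ hdist q)
      (not_adj_of_adj_of_two_lt_dist (by omega) (adj_mid₁ hdist p))
  · exact absurd (h ▸ adj_mid₁ hdist p) (not_adj_of_one_lt_dist (by omega))

lemma mid₂_eq_of_mid₂_mem_support (hdist : G.dist a b = 3) {p q : Geodesic G a b}
    (h : p.mid₂ ∈ q.1.support) : q.mid₂ = p.mid₂ := by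
  rcases (mem_support_iff hdist).mp h with h | h | h | h
  · exact absurd (h ▸ adj_mid₂ hdist p) (not_adj_of_one_lt_dist (by omega))
  · exact absurd (h ▸ adj_mid₁ hdist q)
      (not_adj_of_adj_of_two_lt_dist (by omega) · (adj_mid₂ hdist p))
  · exact h.symm
  · exact absurd h (adj_mid₂ hdist p).ne

lemma eq_setOf_mid₁_eq (hdist : G.dist a b = 3) {K : Set (Geodesic G a b)}
    (hK : Maximal (SPG G a b).IsClique K)
    (hd : ∀ p ∈ K, ∀ q ∈ K, p ≠ q → diffIndices G a b p q = {2}) {p : Geodesic G a b}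
    (hp : p ∈ K) : K = {q | q.mid₁ = p.mid₁} := by
  refine eq_setOf_of_maximal hK (fun _ _ => spg_adj_of_mid₁_eq hdist) fun q hq => ?_
  obtain rfl | hne := eq_or_ne q p
  · rfl
  · exact mid₁_eq_of_diffIndices_eq_two hdist (hd q hq p hp hne)

lemma eq_setOf_mid₂_eq (hdist : G.dist a b = 3) {K : Set (Geodesic G a b)}
    (hK : Maximal (SPG G a b).IsClique K)
    (hd : ∀ p ∈ K, ∀ q ∈ K, p ≠ q → diffIndices G a b p q = {1}) {p : Geodesic G a b}
    (hp : p ∈ K) : K = {q | q.mid₂ = p.mid₂} := by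
  refine eq_setOf_of_maximal hK (fun _ _ => spg_adj_of_mid₂_eq hdist) fun q hq => ?_
  obtain rfl | hne := eq_or_ne q p
  · rfl
  · exact mid₂_eq_of_diffIndices_eq_one hdist (hd q hq p hp hne)

lemma eq_of_mid₂_mem_support_of_maximal (hdist : G.dist a b = 3) {X : Geodesic G a b}
    (hK : Maximal (SPG G a b).IsClique {p | p.mid₁ = X.mid₁})
    (hX : ∀ p : Geodesic G a b, X.mid₁ ∈ p.1.support → p = X) {p : Geodesic G a b}
    (hp : X.mid₂ ∈ p.1.support) : p = X := by
  by_contra hne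
  have hp₁ : p.mid₁ = X.mid₁ := mem_of_forall_adj_of_maximal hK fun r hr _ => by
    rw [hX r (hr ▸ r.mid₁_mem_support)]
    exact spg_adj_of_mid₂_eq hdist (mid₂_eq_of_mid₂_mem_support hdist hp) hne
  exact hne (hX p (hp₁ ▸ p.mid₁_mem_support))

lemma eq_of_mid₁_mem_support_of_maximal (hdist : G.dist a b = 3) {X : Geodesic G a b}
    (hK : Maximal (SPG G a b).IsClique {p | p.mid₂ = X.mid₂})
    (hX : ∀ p : Geodesic G a b, X.mid₂ ∈ p.1.support → p = X) {p : Geodesic G a b}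
    (hp : X.mid₁ ∈ p.1.support) : p = X := by
  by_contra hne
  have hp₂ : p.mid₂ = X.mid₂ := mem_of_forall_adj_of_maximal hK fun r hr _ => by
    rw [hX r (hr ▸ r.mid₂_mem_support)]
    exact spg_adj_of_mid₁_eq hdist (mid₁_eq_of_mid₁_mem_support hdist hp) hne
  exact hne (hX p (hp₂ ▸ p.mid₂_mem_support))

lemma exists_uvp_witness_not_mem (hdist : G.dist a b = 3) {u w : V} (huw : ¬G.Adj u w)
    (hK₁ : Maximal (SPG G a b).IsClique {p | p.mid₁ = u})
    (hK₂ : Maximal (SPG G a b).IsClique {p | p.mid₂ = w})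
    {X : Geodesic G a b} (hX : UVP G a b X) :
    ∃ v ∈ X.1.support, v ∉ [a, u, w, b] ∧ ∀ p : Geodesic G a b, v ∈ p.1.support → p = X := by
  obtain ⟨v, hvX, huniq⟩ := hX
  have : Nonempty (Geodesic G a b) := ⟨X⟩
  obtain ⟨p₀, hp₀⟩ := nonempty_of_maximal hK₂
  obtain ⟨q₀, hq₀⟩ := nonempty_of_maximal hK₁
  have hp₀q₀ : p₀ ≠ q₀ := fun h => huw (hq₀ ▸ hp₀ ▸ h ▸ adj_mid₁_mid₂ hdist p₀)
  have hXnd := X.2.1.support_nodup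
  simp only [support_eq hdist, List.nodup_cons, List.mem_cons, List.not_mem_nil, or_false]
    at hXnd
  by_cases hv : v ∈ [a, u, w, b]
  swap
  · exact ⟨v, hvX, hv, huniq⟩
  simp only [List.mem_cons, List.not_mem_nil, or_false] at hv
  rcases hv with rfl | rfl | rfl | rfl
  · exact absurd ((huniq p₀ p₀.1.start_mem_support).trans
      (huniq q₀ q₀.1.start_mem_support).symm) hp₀q₀
  · obtain rfl : X.mid₁ = v := huniq q₀ (hq₀ ▸ q₀.mid₁_mem_support) ▸ hq₀
    have hX₂ : X.mid₂ ≠ w := fun h => huw (h ▸ adj_mid₁_mid₂ hdist X)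
    exact ⟨X.mid₂, X.mid₂_mem_support, by simp only [List.mem_cons, List.not_mem_nil, or_false]; grind,
      fun p => eq_of_mid₂_mem_support_of_maximal hdist hK₁ huniq⟩
  · obtain rfl : X.mid₂ = v := huniq p₀ (hp₀ ▸ p₀.mid₂_mem_support) ▸ hp₀
    have hX₁ : X.mid₁ ≠ u := fun h => huw (h ▸ adj_mid₁_mid₂ hdist X)
    exact ⟨X.mid₁, X.mid₁_mem_support, by simp only [List.mem_cons, List.not_mem_nil, or_false]; grind,
      fun p => eq_of_mid₁_mem_support_of_maximal hdist hK₂ huniq⟩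
  · exact absurd ((huniq p₀ p₀.1.end_mem_support).trans
      (huniq q₀ q₀.1.end_mem_support).symm) hp₀q₀

section SupEdge

variable {u w : V} (hdist : G.dist a b = 3) (hu : G.Adj a u) (hw : G.Adj w b)

def viaEdge : Geodesic (G ⊔ edge u w) a b :=
  ofAdj ((dist_sup_edge hdist hu hw).trans hdist) (.inl hu)
    (.inr ((edge_adj u w u w).mpr ⟨.inl ⟨rfl, rfl⟩,
      fun h => not_adj_of_adj_of_two_lt_dist (by omega) hu (h ▸ hw)⟩))
    (.inl hw)

@[simp] lemma mid₁_viaEdge : (viaEdge hdist hu hw).mid₁ = u := rfl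

@[simp] lemma mid₂_viaEdge : (viaEdge hdist hu hw).mid₂ = w := rfl

lemma support_viaEdge : (viaEdge hdist hu hw).1.support = [a, u, w, b] :=
  support_eq ((dist_sup_edge hdist hu hw).trans hdist) _

lemma eq_viaEdge_or_exists_eq_mapLe (P : Geodesic (G ⊔ edge u w) a b) :
    P = viaEdge hdist hu hw ∨ ∃ p, P = mapLe le_sup_left (dist_sup_edge hdist hu hw) p := by
  have hdist' := (dist_sup_edge hdist hu hw).trans hdist
  have h₁ := (sup_edge_adj_start_iff hdist hu hw).mp (adj_mid₁ hdist' P)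
  have h₃ := (sup_edge_adj_end_iff hdist hu hw).mp (adj_mid₂ hdist' P)
  rcases adj_mid₁_mid₂ hdist' P with h₂ | h₂
  · exact .inr ⟨ofAdj hdist h₁ h₂ h₃, ext_mid hdist' (by simp) (by simp)⟩
  rcases ((edge_adj u w _ _).mp h₂).1 with ⟨h₁u, h₂w⟩ | ⟨h₁w, -⟩
  · exact .inl (ext_mid hdist' h₁u h₂w)
  · exact absurd hw (not_adj_of_adj_of_two_lt_dist (by omega) (h₁w ▸ h₁))

lemma mapLe_ne_viaEdge (huw : ¬G.Adj u w) (p : Geodesic G a b) :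
    mapLe le_sup_left (dist_sup_edge hdist hu hw) p ≠ viaEdge hdist hu hw := fun h => by
  have h₁ : p.mid₁ = u := by simpa using congrArg mid₁ h
  have h₂ : p.mid₂ = w := by simpa using congrArg mid₂ h
  exact huw (h₁ ▸ h₂ ▸ adj_mid₁_mid₂ hdist p)

noncomputable def supEdgeEquiv (huw : ¬G.Adj u w) :
    Geodesic G a b ⊕ Unit ≃ Geodesic (G ⊔ edge u w) a b :=
  .ofBijective
    (Sum.elim (mapLe le_sup_left (dist_sup_edge hdist hu hw)) fun _ => viaEdge hdist hu hw)
    ⟨(mapLe_injective _ _).sumElim (fun _ _ _ => rfl) fun p _ => mapLe_ne_viaEdge hdist hu hw huw p,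
      fun P => (eq_viaEdge_or_exists_eq_mapLe hdist hu hw P).elim (fun h => ⟨.inr (), h.symm⟩)
        fun ⟨p, hp⟩ => ⟨.inl p, hp.symm⟩⟩

lemma spg_adj_mapLe_viaEdge_iff (huw : ¬G.Adj u w) {p : Geodesic G a b} :
    (SPG (G ⊔ edge u w) a b).Adj (mapLe le_sup_left (dist_sup_edge hdist hu hw) p)
      (viaEdge hdist hu hw) ↔ p.mid₂ = w ∨ p.mid₁ = u := by
  have hnot : ¬(p.mid₁ = u ∧ p.mid₂ = w) := fun ⟨h₁, h₂⟩ =>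
    huw (h₁ ▸ h₂ ▸ adj_mid₁_mid₂ hdist p)
  rw [spg_adj_iff ((dist_sup_edge hdist hu hw).trans hdist)]
  simp only [mid₁_mapLe, mid₂_mapLe, mid₁_viaEdge, mid₂_viaEdge]
  tauto

end SupEdge

end Geodesic

open Geodesic

theorem stmt_17_general {V : Type u} (G : SimpleGraph V) (a b : V)
    (hdist : G.dist a b = 3)
    (𝒰 𝒲 : Set (Geodesic G a b))
    (h𝒰 : (SPG G a b).IsClique 𝒰) (hmax𝒰 : ∀ K', (SPG G a b).IsClique K' → 𝒰 ⊆ K' → K' = 𝒰)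
    (h𝒲 : (SPG G a b).IsClique 𝒲) (hmax𝒲 : ∀ K', (SPG G a b).IsClique K' → 𝒲 ⊆ K' → K' = 𝒲)
    (hdisj : Disjoint 𝒰 𝒲)
    (hd𝒰 : ∀ p ∈ 𝒰, ∀ q ∈ 𝒰, p ≠ q → diffIndices G a b p q = {1})
    (hd𝒲 : ∀ p ∈ 𝒲, ∀ q ∈ 𝒲, p ≠ q → diffIndices G a b p q = {2}) :
    -- `H'`: the graph obtained from `SPG G a b` by adding one new vertex `Sum.inr ()`
    -- adjacent to every vertex of `𝒰` and every vertex of `𝒲`.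
    let H' : SimpleGraph (Geodesic G a b ⊕ Unit) := SimpleGraph.fromRel fun x y =>
      (∃ p q, x = Sum.inl p ∧ y = Sum.inl q ∧ (SPG G a b).Adj p q) ∨
      (∃ p, x = Sum.inl p ∧ (p ∈ 𝒰 ∨ p ∈ 𝒲) ∧ y = Sum.inr ())
    ∃ (V' : Type u) (G' : SimpleGraph V') (a' b' : V') (e : SPG G' a' b' ≃g H'),
      ∀ X : Geodesic G a b, UVP G a b X → UVP G' a' b' (e.symm (Sum.inl X)) := by
  intro H'
  replace h𝒰 := maximal_isClique_of_forall h𝒰 hmax𝒰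
  replace h𝒲 := maximal_isClique_of_forall h𝒲 hmax𝒲
  have : Nonempty (Geodesic G a b) := nonempty_of_reachable (.of_dist_ne_zero (by omega))
  obtain ⟨p₀, hp₀⟩ := nonempty_of_maximal h𝒰
  obtain ⟨q₀, hq₀⟩ := nonempty_of_maximal h𝒲
  obtain rfl := eq_setOf_mid₂_eq hdist h𝒰 hd𝒰 hp₀
  obtain rfl := eq_setOf_mid₁_eq hdist h𝒲 hd𝒲 hq₀
  have hu := adj_mid₁ hdist q₀
  have hw := adj_mid₂ hdist p₀
  have huw : ¬G.Adj q₀.mid₁ p₀.mid₂ := fun h =>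
    Set.disjoint_left.mp hdisj (show ofAdj hdist hu h hw ∈ {q | q.mid₂ = p₀.mid₂} from rfl) rfl
  -- `H'` unfolds to `(SPG G a b).adjoinVertex (𝒰 ∪ 𝒲)`.
  refine ⟨V, G ⊔ edge q₀.mid₁ p₀.mid₂, a, b,
    adjoinVertexIso (N := _ ∪ _) (supEdgeEquiv hdist hu hw huw)
      (fun _ _ => spg_adj_mapLe_iff le_sup_left (dist_sup_edge hdist hu hw))
      (fun _ => spg_adj_mapLe_viaEdge_iff hdist hu hw huw), fun X hX => ?_⟩
  obtain ⟨v, hvX, hv, huniq⟩ := exists_uvp_witness_not_mem hdist huw h𝒲 h𝒰 hX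
  exact uvp_mapLe_of_not_mem_support _ _ (eq_viaEdge_or_exists_eq_mapLe hdist hu hw) hvX
    (by rwa [support_viaEdge]) huniq

/-- joining a new vertex to two disjoint maximal cliques with difference
indices 1 and 2 in a two-index-level shortest path graph yields a shortest path graph,
preserving the unique vertex-path property. -/
theorem stmt_17 {V : Type u} (G : SimpleGraph V) (a b : V) (hab : a ≠ b)
    (hdist : G.dist a b = 3)
    (𝒰 𝒲 : Set (Geodesic G a b))
    (h𝒰 : (SPG G a b).IsClique 𝒰) (hmax𝒰 : ∀ K', (SPG G a b).IsClique K' → 𝒰 ⊆ K' → K' = 𝒰)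
    (h𝒲 : (SPG G a b).IsClique 𝒲) (hmax𝒲 : ∀ K', (SPG G a b).IsClique K' → 𝒲 ⊆ K' → K' = 𝒲)
    (hdisj : Disjoint 𝒰 𝒲)
    (hd𝒰 : ∀ p ∈ 𝒰, ∀ q ∈ 𝒰, p ≠ q → diffIndices G a b p q = {1})
    (hd𝒲 : ∀ p ∈ 𝒲, ∀ q ∈ 𝒲, p ≠ q → diffIndices G a b p q = {2}) :
    -- `H'`: the graph obtained from `SPG G a b` by adding one new vertex `Sum.inr ()`
    -- adjacent to every vertex of `𝒰` and every vertex of `𝒲`.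
    let H' : SimpleGraph (Geodesic G a b ⊕ Unit) := SimpleGraph.fromRel fun x y =>
      (∃ p q, x = Sum.inl p ∧ y = Sum.inl q ∧ (SPG G a b).Adj p q) ∨
      (∃ p, x = Sum.inl p ∧ (p ∈ 𝒰 ∨ p ∈ 𝒲) ∧ y = Sum.inr ())
    ∃ (V' : Type u) (G' : SimpleGraph V') (a' b' : V') (e : SPG G' a' b' ≃g H'),
      ∀ X : Geodesic G a b, UVP G a b X → UVP G' a' b' (e.symm (Sum.inl X)) :=
  stmt_17_general G a b hdist 𝒰 𝒲 h𝒰 hmax𝒰 h𝒲 hmax𝒲 hdisj hd𝒰 hd𝒲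
end
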